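/- arXiv:math/0407422 — 5 statements merged into one kernel-verified Lean document; each statement's English description precedes it below -/
import Mathlib

section
/- Let a, b be nonzero integers with |a| ≠ |b| and let c be a nonzero element of (1/2)ℤ. Then V_{a,b,c} is 16-dimensional over ℂ, and both images σ^T(V_{a,b,c}) and σ^D(V_{a,b,c}) are 4-dimensional over ℂ. -/
noncomputable section

open Real

/-- Points of `ℝ³`, written as `(x, y, z)`. -/
abbrev R3 : Type := ℝ × ℝ × ℝ

/-- The space of functions `ℝ³ → ℂ`. -/
abbrev FunSp : Type := R3 → ℂ

/-- `φ_{(a,b,c)}(x,y,z) = exp(2πi(ax+by+cz))`. -/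
noncomputable def phi (a b c : ℝ) : FunSp :=
  fun p => Complex.exp (2 * (Real.pi : ℂ) * Complex.I *
    ((a : ℂ) * (p.1 : ℂ) + (b : ℂ) * (p.2.1 : ℂ) + (c : ℂ) * (p.2.2 : ℂ)))

/-- `τ(x,y,z) = (−y, x, z+1/2)`. -/
def tauMap : R3 → R3 := fun p => (-p.2.1, p.1, p.2.2 + 1/2)

/-- `ρ_x(x,y,z) = (x+1/2, −y, −z)`. -/
def rhoxMap : R3 → R3 := fun p => (p.1 + 1/2, -p.2.1, -p.2.2)

/-- `ρ_y(x,y,z) = (−x, y+1/2, 1−z)`. -/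
def rhoyMap : R3 → R3 := fun p => (-p.1, p.2.1 + 1/2, 1 - p.2.2)

/-- `ρ_z(x,y,z) = (1/2−x, 1/2−y, z+1)`. -/
def rhozMap : R3 → R3 := fun p => (1/2 - p.1, 1/2 - p.2.1, p.2.2 + 1)

/-- The Tetra symmetrization `σ^T f = (1/4)(f + f∘τ + f∘τ∘τ + f∘τ∘τ∘τ)`. -/
noncomputable def sigmaT : FunSp →ₗ[ℂ] FunSp :=
  (4⁻¹ : ℂ) • (LinearMap.id + LinearMap.funLeft ℂ ℂ tauMap
    + LinearMap.funLeft ℂ ℂ (tauMap ∘ tauMap)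
    + LinearMap.funLeft ℂ ℂ (tauMap ∘ tauMap ∘ tauMap))

/-- The Didi symmetrization `σ^D f = (1/4)(f + f∘ρ_x + f∘ρ_y + f∘ρ_z)`. -/
noncomputable def sigmaD : FunSp →ₗ[ℂ] FunSp :=
  (4⁻¹ : ℂ) • (LinearMap.id + LinearMap.funLeft ℂ ℂ rhoxMap
    + LinearMap.funLeft ℂ ℂ rhoyMap + LinearMap.funLeft ℂ ℂ rhozMap)

/-- `V_{a,b,c}`: the ℂ-span of the 16 functions `φ_{(±a,±b,±c)}`, `φ_{(±b,±a,±c)}`. -/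
def Vspace (a b c : ℝ) : Submodule ℂ FunSp :=
  Submodule.span ℂ {f | ∃ s₁ s₂ s₃ : ℝ,
    s₁ ∈ ({1, -1} : Set ℝ) ∧ s₂ ∈ ({1, -1} : Set ℝ) ∧ s₃ ∈ ({1, -1} : Set ℝ) ∧
    (f = phi (s₁ * a) (s₂ * b) (s₃ * c) ∨ f = phi (s₁ * b) (s₂ * a) (s₃ * c))}

end

/-!
The sixteen functions are characters of `ℝ³` with distinct frequencies, hence linearly independent.
Composing a character with `τ` or with one of the `ρ`'s gives a nonzero multiple of another
character: on frequencies, `τ` acts by `(p, q, r) ↦ (q, -p, r)`, with four orbits of size four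
among the sixteen, and the `ρ`'s act by the sign changes `(p, -q, -r)`, `(-p, q, -r)`,
`(-p, -q, r)`, again with four orbits of size four. Characters with frequency in `L*` are periodic
for `Λ = ℤ × ℤ × 2ℤ`, and modulo `Λ` the map `τ` has order four while `1, ρ_x, ρ_y, ρ_z` form a
Klein four-group; hence `σ (f ∘ g) = σ f` for these `f`, and `σ` maps all characters of one orbit
to multiples of a single function. That function is nonzero, since its coefficient on the
representative is `1/4`, and lies in the span of its orbit, so the image has one dimension per
orbit.
-/

section FinrankImage

open Submodule

variable {K M ι κ : Type*} [Field K] [AddCommGroup M] [Module K M]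

theorem LinearIndependent.iSupIndep_span_fiber {F : ι → M} (hF : LinearIndependent K F)
    (pr : ι → κ) : iSupIndep fun k => span K (F '' (pr ⁻¹' {k})) := by
  refine iSupIndep_def.2 fun k => (hF.disjoint_span_image (s := pr ⁻¹' {k})
    (t := (pr ⁻¹' {k})ᶜ) disjoint_compl_right).mono_right ?_
  refine iSup₂_le fun j hj => span_mono (Set.image_mono fun i hi => ?_)
  simp_all

theorem finrank_map_span_eq_card [Fintype κ] {F : ι → M} (hF : LinearIndependent K F)
    (σ : M →ₗ[K] M) (pr : ι → κ) (sec : κ → ι) (hsec : ∀ k, pr (sec k) = k)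
    (hdiag : ∀ k, ∃ c ≠ (0 : K),
      σ (F (sec k)) - c • F (sec k) ∈ span K (F '' {j | pr j = k ∧ j ≠ sec k}))
    (hrep : ∀ i, σ (F i) ∈ K ∙ σ (F (sec (pr i)))) :
    Module.finrank K (map σ (span K (Set.range F))) = Fintype.card κ := by
  set G : κ → M := fun k => σ (F (sec k))
  have hspan : map σ (span K (Set.range F)) = span K (Set.range G) := by
    rw [map_span, ← Set.range_comp]
    refine le_antisymm (span_le.2 ?_) (span_mono (Set.range_comp_subset_range sec (σ ∘ F)))
    rintro _ ⟨i, rfl⟩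
    exact (span_singleton_le_iff_mem _ _).2 (subset_span (Set.mem_range_self (pr i))) (hrep i)
  have hG : ∀ k, G k ∈ span K (F '' (pr ⁻¹' {k})) ∧ G k ≠ 0 := by
    intro k
    obtain ⟨c, hc, hw⟩ := hdiag k
    have hsec_mem : F (sec k) ∈ span K (F '' (pr ⁻¹' {k})) := subset_span ⟨_, hsec k, rfl⟩
    have hw' := span_mono (Set.image_mono fun j (hj : pr j = k ∧ j ≠ sec k) => hj.1) hw
    refine ⟨sub_add_cancel (G k) (c • F (sec k)) ▸ add_mem hw' (smul_mem _ c hsec_mem),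
      fun h0 => ?_⟩
    refine hF.notMem_span_image (fun h => h.2 rfl : sec k ∉ {j | pr j = k ∧ j ≠ sec k}) ?_
    simpa [G, h0, hc] using smul_mem _ (-c⁻¹) hw
  rw [hspan, finrank_span_eq_card ((hF.iSupIndep_span_fiber pr).linearIndependent _
    (fun k => (hG k).1) fun k => (hG k).2)]

end FinrankImage

noncomputable section

open Real Complex Submodule

theorem phi_apply_add (p q r : ℝ) (x y : R3) :
    phi p q r (x + y) = phi p q r x * phi p q r y := by
  simp only [phi, Prod.fst_add, Prod.snd_add, ← Complex.exp_add]
  congr 1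
  push_cast
  ring

def phiHom (v : R3) : Multiplicative R3 →* ℂ where
  toFun x := phi v.1 v.2.1 v.2.2 x.toAdd
  map_one' := by simp [phi]
  map_mul' x y := phi_apply_add _ _ _ x.toAdd y.toAdd

theorem eq_of_forall_cexp_mul_eq {u v : ℝ}
    (h : ∀ x : ℝ, cexp (2 * π * I * (u * x)) = cexp (2 * π * I * (v * x))) : u = v := by
  by_contra huv
  have hsub : (u : ℂ) - v ≠ 0 := sub_ne_zero.2 (by exact_mod_cast huv)
  have hx := h (1 / (2 * (u - v)))
  have hπ : 2 * π * I * (u * (1 / (2 * (u - v)) : ℝ)) =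
      2 * π * I * (v * (1 / (2 * (u - v)) : ℝ)) + π * I := by
    push_cast
    field_simp
    ring
  rw [hπ, Complex.exp_add, Complex.exp_pi_mul_I, mul_neg_one, neg_eq_iff_add_eq_zero,
    ← two_mul, mul_eq_zero] at hx
  simp [Complex.exp_ne_zero] at hx

theorem eq_of_phi_eq {p q r p' q' r' : ℝ} (h : phi p q r = phi p' q' r') :
    p = p' ∧ q = q' ∧ r = r' := by
  refine ⟨eq_of_forall_cexp_mul_eq fun x => ?_, eq_of_forall_cexp_mul_eq fun x => ?_,
    eq_of_forall_cexp_mul_eq fun x => ?_⟩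
  · simpa [phi] using congrFun h (x, 0, 0)
  · simpa [phi] using congrFun h (0, x, 0)
  · simpa [phi] using congrFun h (0, 0, x)

theorem linearIndependent_phi {ι : Type*} {v : ι → R3} (hv : Function.Injective v) :
    LinearIndependent ℂ fun i => phi (v i).1 (v i).2.1 (v i).2.2 := by
  refine (linearIndependent_monoidHom (Multiplicative R3) ℂ).comp (phiHom ∘ v) fun i j hij => ?_
  obtain ⟨h1, h2, h3⟩ := eq_of_phi_eq (congrArg DFunLike.coe hij)
  exact hv (Prod.ext h1 (Prod.ext h2 h3))

theorem phi_comp_tauMap (p q r : ℝ) :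
    phi p q r ∘ tauMap = cexp (π * I * r) • phi q (-p) r := by
  funext x
  simp only [Function.comp_apply, phi, tauMap, Pi.smul_apply, smul_eq_mul, ← Complex.exp_add]
  congr 1
  push_cast
  ring

theorem phi_comp_rhoxMap (p q r : ℝ) :
    phi p q r ∘ rhoxMap = cexp (π * I * p) • phi p (-q) (-r) := by
  funext x
  simp only [Function.comp_apply, phi, rhoxMap, Pi.smul_apply, smul_eq_mul, ← Complex.exp_add]
  congr 1
  push_cast
  ring

theorem phi_comp_rhoyMap (p q r : ℝ) :
    phi p q r ∘ rhoyMap = cexp (π * I * (q + 2 * r)) • phi (-p) q (-r) := by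
  funext x
  simp only [Function.comp_apply, phi, rhoyMap, Pi.smul_apply, smul_eq_mul, ← Complex.exp_add]
  congr 1
  push_cast
  ring

theorem phi_comp_rhozMap (p q r : ℝ) :
    phi p q r ∘ rhozMap = cexp (π * I * (p + q + 2 * r)) • phi (-p) (-q) r := by
  funext x
  simp only [Function.comp_apply, phi, rhozMap, Pi.smul_apply, smul_eq_mul, ← Complex.exp_add]
  congr 1
  push_cast
  ring

theorem sigmaT_eq (f : FunSp) :
    sigmaT f = (4⁻¹ : ℂ) • (f + f ∘ tauMap + f ∘ tauMap ∘ tauMap + f ∘ tauMap ∘ tauMap ∘ tauMap) :=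
  rfl

theorem sigmaD_eq (f : FunSp) :
    sigmaD f = (4⁻¹ : ℂ) • (f + f ∘ rhoxMap + f ∘ rhoyMap + f ∘ rhozMap) :=
  rfl

theorem sigmaT_sub_smul_self (f : FunSp) :
    sigmaT f - (4⁻¹ : ℂ) • f =
      (4⁻¹ : ℂ) • (f ∘ tauMap + f ∘ tauMap ∘ tauMap + f ∘ tauMap ∘ tauMap ∘ tauMap) := by
  rw [sigmaT_eq]
  module

theorem sigmaD_sub_smul_self (f : FunSp) :
    sigmaD f - (4⁻¹ : ℂ) • f = (4⁻¹ : ℂ) • (f ∘ rhoxMap + f ∘ rhoyMap + f ∘ rhozMap) := by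
  rw [sigmaD_eq]
  module

/-- Invariance under the translation lattice `Λ = ℤ × ℤ × 2ℤ` dual to `L*`. -/
def IsLatticePeriodic (f : FunSp) : Prop :=
  ∀ (x : R3) (m n k : ℤ), f (x + ((m : ℝ), (n : ℝ), 2 * (k : ℝ))) = f x

theorem IsLatticePeriodic.apply_eq {f : FunSp} (hf : IsLatticePeriodic f) {x y : R3}
    (m n k : ℤ) (h : y = x + ((m : ℝ), (n : ℝ), 2 * (k : ℝ))) : f y = f x :=
  h ▸ hf x m n k

theorem phi_isLatticePeriodic {p q r : ℝ} (hp : ∃ m : ℤ, p = m) (hq : ∃ n : ℤ, q = n)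
    (hr : ∃ k : ℤ, r = k / 2) : IsLatticePeriodic (phi p q r) := by
  obtain ⟨p, rfl⟩ := hp
  obtain ⟨q, rfl⟩ := hq
  obtain ⟨r, rfl⟩ := hr
  intro x m n k
  rw [phi_apply_add]
  convert mul_one _
  rw [phi, Complex.exp_eq_one_iff]
  exact ⟨p * m + q * n + r * k, by push_cast; ring⟩

theorem sigmaT_comp_tauMap {f : FunSp} (hf : IsLatticePeriodic f) :
    sigmaT (f ∘ tauMap) = sigmaT f := by
  funext x
  have h4 : f (tauMap (tauMap (tauMap (tauMap x)))) = f x :=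
    hf.apply_eq 0 0 1 (by ext <;> simp [tauMap]; ring)
  simp only [sigmaT_eq, Pi.smul_apply, Pi.add_apply, Function.comp_apply, h4]
  ring

theorem sigmaD_comp_rhoxMap {f : FunSp} (hf : IsLatticePeriodic f) :
    sigmaD (f ∘ rhoxMap) = sigmaD f := by
  funext x
  have hx : f (rhoxMap (rhoxMap x)) = f x :=
    hf.apply_eq 1 0 0 (by ext <;> simp [rhoxMap]; ring)
  have hy : f (rhoxMap (rhoyMap x)) = f (rhozMap x) :=
    hf.apply_eq 0 (-1) (-1) (by ext <;> simp [rhoxMap, rhoyMap, rhozMap] <;> ring)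
  have hz : f (rhoxMap (rhozMap x)) = f (rhoyMap x) :=
    hf.apply_eq 1 (-1) (-1) (by ext <;> simp [rhoxMap, rhoyMap, rhozMap] <;> ring)
  simp only [sigmaD_eq, Pi.smul_apply, Pi.add_apply, Function.comp_apply, hx, hy, hz]
  ring

theorem sigmaD_comp_rhoyMap {f : FunSp} (hf : IsLatticePeriodic f) :
    sigmaD (f ∘ rhoyMap) = sigmaD f := by
  funext x
  have hx : f (rhoyMap (rhoxMap x)) = f (rhozMap x) :=
    hf.apply_eq (-1) 0 0 (by ext <;> simp [rhoxMap, rhoyMap, rhozMap] <;> ring)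
  have hy : f (rhoyMap (rhoyMap x)) = f x :=
    hf.apply_eq 0 1 0 (by ext <;> simp [rhoyMap]; ring)
  have hz : f (rhoyMap (rhozMap x)) = f (rhoxMap x) :=
    hf.apply_eq (-1) 1 0 (by ext <;> simp [rhoxMap, rhoyMap, rhozMap] <;> ring)
  simp only [sigmaD_eq, Pi.smul_apply, Pi.add_apply, Function.comp_apply, hx, hy, hz]
  ring

theorem sigmaD_comp_rhozMap {f : FunSp} (hf : IsLatticePeriodic f) :
    sigmaD (f ∘ rhozMap) = sigmaD f := by
  funext x
  have hx : f (rhozMap (rhoxMap x)) = f (rhoyMap x) :=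
    congrArg f (by ext <;> simp [rhoxMap, rhoyMap, rhozMap] <;> ring)
  have hy : f (rhozMap (rhoyMap x)) = f (rhoxMap x) :=
    hf.apply_eq 0 0 1 (by ext <;> simp [rhoxMap, rhoyMap, rhozMap] <;> ring)
  have hz : f (rhozMap (rhozMap x)) = f x :=
    hf.apply_eq 0 0 1 (by ext <;> simp [rhozMap]; ring)
  simp only [sigmaD_eq, Pi.smul_apply, Pi.add_apply, Function.comp_apply, hx, hy, hz]
  ring

def signOf (e : Bool) : ℝ := if e then 1 else -1

theorem range_signOf : Set.range signOf = {1, -1} := by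
  ext s
  simp only [Set.mem_range, Set.mem_insert_iff, Set.mem_singleton_iff]
  constructor
  · rintro ⟨e, rfl⟩
    cases e <;> simp [signOf]
  · rintro (rfl | rfl)
    exacts [⟨true, rfl⟩, ⟨false, rfl⟩]

theorem abs_signOf_mul (e : Bool) (t : ℝ) : |signOf e * t| = |t| := by
  cases e <;> simp [signOf]

@[simp]
theorem signOf_not (e : Bool) : signOf (!e) = -signOf e := by
  cases e <;> simp [signOf]

theorem signOf_injective : Function.Injective signOf := by
  intro e e'
  cases e <;> cases e' <;> norm_num [signOf]

theorem exists_signOf_mul_intCast_eq (e : Bool) (m : ℤ) : ∃ n : ℤ, signOf e * m = n :=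
  ⟨if e then m else -m, by cases e <;> simp [signOf]⟩

section Frequencies

abbrev Idx : Type := Bool × Bool × Bool × Bool

variable (a b c : ℝ)

/-- The index `(w, x, y, z)` stands for the frequency `(±a, ±b, ±c)` (`w = false`) or
`(±b, ±a, ±c)` (`w = true`), with the three signs encoded by `x, y, z`. -/
def freq (i : Idx) : R3 :=
  (signOf i.2.1 * (if i.1 then b else a), signOf i.2.2.1 * (if i.1 then a else b),
    signOf i.2.2.2 * c)

def gen (i : Idx) : FunSp :=
  phi (freq a b c i).1 (freq a b c i).2.1 (freq a b c i).2.2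

theorem Vspace_eq_span_range_gen : Vspace a b c = span ℂ (Set.range (gen a b c)) := by
  rw [Vspace, ← range_signOf]
  congr 1
  ext f
  simp only [Set.mem_ofPred_eq, Set.mem_range]
  constructor
  · rintro ⟨_, _, _, ⟨x, rfl⟩, ⟨y, rfl⟩, ⟨z, rfl⟩, rfl | rfl⟩
    exacts [⟨(false, x, y, z), rfl⟩, ⟨(true, x, y, z), rfl⟩]
  · rintro ⟨⟨w, x, y, z⟩, rfl⟩
    exact ⟨_, _, _, ⟨x, rfl⟩, ⟨y, rfl⟩, ⟨z, rfl⟩, by cases w <;> simp [gen, freq]⟩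

variable {a b c}

theorem freq_injective (ha : a ≠ 0) (hb : b ≠ 0) (hab : |a| ≠ |b|) (hc : c ≠ 0) :
    Function.Injective (freq a b c) := by
  rintro ⟨w, x, y, z⟩ ⟨w', x', y', z'⟩ h
  simp only [freq, Prod.mk.injEq] at h
  obtain ⟨h₁, h₂, h₃⟩ := h
  obtain rfl : w = w' := by
    have := congrArg abs h₁
    simp only [abs_signOf_mul] at this
    cases w <;> cases w' <;> simp_all [eq_comm]
  obtain rfl : x = x' := signOf_injective (mul_right_cancel₀ (by cases w <;> assumption) h₁)
  obtain rfl : y = y' := signOf_injective (mul_right_cancel₀ (by cases w <;> assumption) h₂)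
  obtain rfl : z = z' := signOf_injective (mul_right_cancel₀ hc h₃)
  rfl

theorem gen_isLatticePeriodic {a b : ℤ} (hc : ∃ k : ℤ, c = k / 2)
    (i : Idx) : IsLatticePeriodic (gen a b c i) := by
  obtain ⟨k, rfl⟩ := hc
  obtain ⟨w, x, y, z⟩ := i
  obtain ⟨n, hn⟩ := exists_signOf_mul_intCast_eq z k
  refine phi_isLatticePeriodic ?_ ?_ ⟨n, by simp only [freq, ← hn]; ring⟩ <;>
    cases w <;> exact exists_signOf_mul_intCast_eq _ _

end Frequencies

theorem sigma_mem_span_singleton_of_comp {σ : FunSp →ₗ[ℂ] FunSp} {f g : FunSp} {h : R3 → R3}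
    {u : ℂ} (hu : u ≠ 0) (hfg : f ∘ h = u • g) (hσ : σ (f ∘ h) = σ f) : σ g ∈ ℂ ∙ σ f :=
  mem_span_singleton.2
    ⟨u⁻¹, by rw [← hσ, hfg, map_smul, smul_smul, inv_mul_cancel₀ hu, one_smul]⟩

theorem comp_mem_span_singleton {f g g' : FunSp} {h : R3 → R3} (hf : f ∈ ℂ ∙ g)
    (hg : g ∘ h ∈ ℂ ∙ g') : f ∘ h ∈ ℂ ∙ g' := by
  obtain ⟨u, rfl⟩ := mem_span_singleton.1 hf
  exact smul_mem _ u hg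

section Symmetrizations

def tauIdx (i : Idx) : Idx := (!i.1, i.2.2.1, !i.2.1, i.2.2.2)

def rhoxIdx (i : Idx) : Idx := (i.1, i.2.1, !i.2.2.1, !i.2.2.2)

def rhoyIdx (i : Idx) : Idx := (i.1, !i.2.1, i.2.2.1, !i.2.2.2)

def rhozIdx (i : Idx) : Idx := (i.1, !i.2.1, !i.2.2.1, i.2.2.2)

variable {a b c : ℝ}

theorem gen_comp_tauMap (i : Idx) :
    gen a b c i ∘ tauMap = cexp (π * I * (freq a b c i).2.2) • gen a b c (tauIdx i) := by
  obtain ⟨w, x, y, z⟩ := i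
  rw [gen, phi_comp_tauMap]
  cases w <;> simp [gen, freq, tauIdx]

theorem gen_comp_rhoxMap (i : Idx) :
    gen a b c i ∘ rhoxMap = cexp (π * I * (freq a b c i).1) • gen a b c (rhoxIdx i) := by
  obtain ⟨w, x, y, z⟩ := i
  rw [gen, phi_comp_rhoxMap]
  cases w <;> simp [gen, freq, rhoxIdx]

theorem gen_comp_rhoyMap (i : Idx) :
    gen a b c i ∘ rhoyMap =
      cexp (π * I * ((freq a b c i).2.1 + 2 * (freq a b c i).2.2)) • gen a b c (rhoyIdx i) := by
  obtain ⟨w, x, y, z⟩ := i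
  rw [gen, phi_comp_rhoyMap]
  cases w <;> simp [gen, freq, rhoyIdx]

theorem gen_comp_rhozMap (i : Idx) :
    gen a b c i ∘ rhozMap = cexp (π * I * ((freq a b c i).1 + (freq a b c i).2.1 +
      2 * (freq a b c i).2.2)) • gen a b c (rhozIdx i) := by
  obtain ⟨w, x, y, z⟩ := i
  rw [gen, phi_comp_rhozMap]
  cases w <;> simp [gen, freq, rhozIdx]

/-- `tauIdx` permutes the 16 indices in four 4-cycles; this labels them. -/
def tauOrbit (i : Idx) : Bool × Bool := (i.1 ^^ i.2.1 ^^ i.2.2.1, i.2.2.2)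

def tauOrbitRep (k : Bool × Bool) : Idx := (k.1, false, false, k.2)

theorem finrank_map_sigmaT_span_gen (hinj : Function.Injective (freq a b c))
    (hper : ∀ i, IsLatticePeriodic (gen a b c i)) :
    Module.finrank ℂ (map sigmaT (span ℂ (Set.range (gen a b c)))) = 4 := by
  have hstep (j : Idx) : gen a b c j ∘ tauMap ∈ ℂ ∙ gen a b c (tauIdx j) :=
    mem_span_singleton.2 ⟨_, (gen_comp_tauMap j).symm⟩
  have hσstep (j : Idx) : sigmaT (gen a b c (tauIdx j)) ∈ ℂ ∙ sigmaT (gen a b c j) :=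
    sigma_mem_span_singleton_of_comp (Complex.exp_ne_zero _) (gen_comp_tauMap j)
      (sigmaT_comp_tauMap (hper j))
  have hsec : ∀ k, tauOrbit (tauOrbitRep k) = k := by decide
  have hfiber : ∀ j, tauOrbit (tauIdx j) = tauOrbit j := by decide
  have hfree : ∀ j, tauIdx j ≠ j ∧ tauIdx (tauIdx j) ≠ j ∧ tauIdx (tauIdx (tauIdx j)) ≠ j := by
    decide
  have horbit : ∀ i, ∃ s, s = tauOrbitRep (tauOrbit i) ∧
      (i = s ∨ i = tauIdx s ∨ i = tauIdx (tauIdx s) ∨ i = tauIdx (tauIdx (tauIdx s))) := by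
    decide
  refine finrank_map_span_eq_card (F := gen a b c) (linearIndependent_phi hinj) sigmaT tauOrbit
    tauOrbitRep hsec (fun k => ⟨4⁻¹, by norm_num, ?_⟩) fun i => ?_
  · set j := tauOrbitRep k
    have hmem {j'} (hj' : tauOrbit j' = tauOrbit j) (hne : j' ≠ j) :
        ℂ ∙ gen a b c j' ≤ span ℂ (gen a b c '' {j | tauOrbit j = k ∧ j ≠ tauOrbitRep k}) :=
      (span_singleton_le_iff_mem _ _).2 (subset_span ⟨j', ⟨hj'.trans (hsec k), hne⟩, rfl⟩)
    have h₂ := comp_mem_span_singleton (hstep j) (hstep _)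
    have h₃ := comp_mem_span_singleton h₂ (hstep _)
    rw [sigmaT_sub_smul_self]
    obtain ⟨hf₁, hf₂, hf₃⟩ := hfree j
    refine smul_mem _ _ (add_mem (add_mem ?_ ?_) ?_)
    · exact hmem (hfiber j) hf₁ (hstep j)
    · exact hmem ((hfiber _).trans (hfiber j)) hf₂ h₂
    · exact hmem ((hfiber _).trans ((hfiber _).trans (hfiber j))) hf₃ h₃
  · obtain ⟨s, hs, rfl | rfl | rfl | rfl⟩ := horbit i <;> rw [← hs]
    · exact mem_span_singleton_self _
    · exact hσstep s
    · exact mem_span_singleton_trans (hσstep _) (hσstep s)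
    · exact mem_span_singleton_trans (hσstep _)
        (mem_span_singleton_trans (hσstep _) (hσstep s))

def rhoOrbit (i : Idx) : Bool × Bool := (i.1, i.2.1 ^^ i.2.2.1 ^^ i.2.2.2)

def rhoOrbitRep (k : Bool × Bool) : Idx := (k.1, k.2, false, false)

theorem finrank_map_sigmaD_span_gen (hinj : Function.Injective (freq a b c))
    (hper : ∀ i, IsLatticePeriodic (gen a b c i)) :
    Module.finrank ℂ (map sigmaD (span ℂ (Set.range (gen a b c)))) = 4 := by
  have hsec : ∀ k, rhoOrbit (rhoOrbitRep k) = k := by decide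
  have hfiber : ∀ j, rhoOrbit (rhoxIdx j) = rhoOrbit j ∧ rhoOrbit (rhoyIdx j) = rhoOrbit j ∧
      rhoOrbit (rhozIdx j) = rhoOrbit j := by
    decide
  have hfree : ∀ j, rhoxIdx j ≠ j ∧ rhoyIdx j ≠ j ∧ rhozIdx j ≠ j := by decide
  have horbit : ∀ i, ∃ s, s = rhoOrbitRep (rhoOrbit i) ∧
      (i = s ∨ i = rhoxIdx s ∨ i = rhoyIdx s ∨ i = rhozIdx s) := by
    decide
  refine finrank_map_span_eq_card (F := gen a b c) (linearIndependent_phi hinj) sigmaD rhoOrbit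
    rhoOrbitRep hsec (fun k => ⟨4⁻¹, by norm_num, ?_⟩) fun i => ?_
  · set j := rhoOrbitRep k
    have hmem {j'} (hj' : rhoOrbit j' = rhoOrbit j) (hne : j' ≠ j) :
        ℂ ∙ gen a b c j' ≤ span ℂ (gen a b c '' {j | rhoOrbit j = k ∧ j ≠ rhoOrbitRep k}) :=
      (span_singleton_le_iff_mem _ _).2 (subset_span ⟨j', ⟨hj'.trans (hsec k), hne⟩, rfl⟩)
    rw [sigmaD_sub_smul_self]
    obtain ⟨hx, hy, hz⟩ := hfiber j
    obtain ⟨hx', hy', hz'⟩ := hfree j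
    refine smul_mem _ _ (add_mem (add_mem ?_ ?_) ?_)
    · exact hmem hx hx' (mem_span_singleton.2 ⟨_, (gen_comp_rhoxMap j).symm⟩)
    · exact hmem hy hy' (mem_span_singleton.2 ⟨_, (gen_comp_rhoyMap j).symm⟩)
    · exact hmem hz hz' (mem_span_singleton.2 ⟨_, (gen_comp_rhozMap j).symm⟩)
  · obtain ⟨s, hs, rfl | rfl | rfl | rfl⟩ := horbit i <;> rw [← hs]
    · exact mem_span_singleton_self _
    · exact sigma_mem_span_singleton_of_comp (Complex.exp_ne_zero _) (gen_comp_rhoxMap s)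
        (sigmaD_comp_rhoxMap (hper s))
    · exact sigma_mem_span_singleton_of_comp (Complex.exp_ne_zero _) (gen_comp_rhoyMap s)
        (sigmaD_comp_rhoyMap (hper s))
    · exact sigma_mem_span_singleton_of_comp (Complex.exp_ne_zero _) (gen_comp_rhozMap s)
        (sigmaD_comp_rhozMap (hper s))

end Symmetrizations

end

/-- for nonzero integers `a, b` with `|a| ≠ |b|` and a nonzero half-integer
`c`, the space `V_{a,b,c}` is 16-dimensional and both images `σ^T(V_{a,b,c})` and
`σ^D(V_{a,b,c})` are 4-dimensional. -/
theorem generic_dims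
    (a b : ℤ) (ha : a ≠ 0) (hb : b ≠ 0) (hab : |a| ≠ |b|)
    (c : ℝ) (hc : ∃ k : ℤ, c = (k : ℝ) / 2) (hc0 : c ≠ 0) :
    Module.finrank ℂ ↥(Vspace (a : ℝ) (b : ℝ) c) = 16 ∧
    Module.finrank ℂ ↥(Submodule.map sigmaT (Vspace (a : ℝ) (b : ℝ) c)) = 4 ∧
    Module.finrank ℂ ↥(Submodule.map sigmaD (Vspace (a : ℝ) (b : ℝ) c)) = 4 := by
  have hinj : Function.Injective (freq (a : ℝ) b c) :=
    freq_injective (Int.cast_ne_zero.2 ha) (Int.cast_ne_zero.2 hb) (by exact_mod_cast hab) hc0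
  have hper := gen_isLatticePeriodic (a := a) (b := b) hc
  rw [Vspace_eq_span_range_gen]
  exact ⟨(finrank_span_eq_card (linearIndependent_phi hinj)).trans rfl,
    finrank_map_sigmaT_span_gen hinj hper, finrank_map_sigmaD_span_gen hinj hper⟩
end

section
/- For every positive odd integer n, the image σ^D(V_{n,0,0}) is the zero subspace. -/
lemma key1 (a : ℝ) (ha : Complex.exp ((Real.pi:ℂ) * Complex.I * a) = -1) :
    sigmaD (phi a 0 0) = 0 := by
  funext p
  obtain ⟨x, y, z⟩ := p
  simp only [sigmaD, phi, rhoxMap, rhoyMap, rhozMap, LinearMap.smul_apply,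
    LinearMap.add_apply, LinearMap.id_apply, LinearMap.funLeft_apply, Pi.smul_apply,
    Pi.add_apply, Pi.zero_apply, Complex.ofReal_zero, zero_mul, add_zero, smul_eq_mul]
  have h2 : (2*(Real.pi:ℂ)*Complex.I*((a:ℂ)*((x:ℝ)+1/2 : ℝ))) =
      2*(Real.pi:ℂ)*Complex.I*((a:ℂ)*(x:ℂ)) + (Real.pi:ℂ)*Complex.I*a := by
    push_cast; ring
  have h3 : (2*(Real.pi:ℂ)*Complex.I*((a:ℂ)*((-x : ℝ):ℂ))) =
      -(2*(Real.pi:ℂ)*Complex.I*((a:ℂ)*(x:ℂ))) := by push_cast; ring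
  have h4 : (2*(Real.pi:ℂ)*Complex.I*((a:ℂ)*((1/2-x : ℝ):ℂ))) =
      -(2*(Real.pi:ℂ)*Complex.I*((a:ℂ)*(x:ℂ))) + (Real.pi:ℂ)*Complex.I*a := by
    push_cast; ring
  rw [h2, h3, h4, Complex.exp_add, Complex.exp_add, ha]
  ring

lemma key2 (a : ℝ) (ha : Complex.exp ((Real.pi:ℂ) * Complex.I * a) = -1) :
    sigmaD (phi 0 a 0) = 0 := by
  funext p
  obtain ⟨x, y, z⟩ := p
  simp only [sigmaD, phi, rhoxMap, rhoyMap, rhozMap, LinearMap.smul_apply,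
    LinearMap.add_apply, LinearMap.id_apply, LinearMap.funLeft_apply, Pi.smul_apply,
    Pi.add_apply, Pi.zero_apply, Complex.ofReal_zero, zero_mul, add_zero, zero_add,
    smul_eq_mul]
  have h2 : (2*(Real.pi:ℂ)*Complex.I*((a:ℂ)*((-y : ℝ):ℂ))) =
      -(2*(Real.pi:ℂ)*Complex.I*((a:ℂ)*(y:ℂ))) := by push_cast; ring
  have h3 : (2*(Real.pi:ℂ)*Complex.I*((a:ℂ)*((y+1/2 : ℝ):ℂ))) =
      2*(Real.pi:ℂ)*Complex.I*((a:ℂ)*(y:ℂ)) + (Real.pi:ℂ)*Complex.I*a := by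
    push_cast; ring
  have h4 : (2*(Real.pi:ℂ)*Complex.I*((a:ℂ)*((1/2-y : ℝ):ℂ))) =
      -(2*(Real.pi:ℂ)*Complex.I*((a:ℂ)*(y:ℂ))) + (Real.pi:ℂ)*Complex.I*a := by
    push_cast; ring
  rw [h2, h3, h4, Complex.exp_add, Complex.exp_add, ha]
  ring

lemma expodd (m : ℤ) (hm : Odd m) :
    Complex.exp ((Real.pi:ℂ) * Complex.I * ((m:ℝ):ℂ)) = -1 := by
  rw [show ((Real.pi:ℂ) * Complex.I * ((m:ℝ):ℂ)) = (m:ℤ) * ((Real.pi:ℂ) * Complex.I) by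
    push_cast; ring]
  rw [Complex.exp_int_mul, Complex.exp_pi_mul_I]
  exact hm.neg_one_zpow

/-- for a positive odd integer `n`, the image `σ^D(V_{n,0,0})` is the zero
subspace. -/
theorem sigmaD_V_n00_odd (n : ℤ) (hn : 0 < n) (hodd : Odd n) :
    Submodule.map sigmaD (Vspace (n : ℝ) 0 0) = ⊥ := by
  rw [Vspace, Submodule.map_span, Submodule.span_eq_bot]
  rintro x ⟨f, ⟨s₁, s₂, s₃, h1, h2, h3, (rfl | rfl)⟩, rfl⟩
  · rw [mul_zero, mul_zero]
    rcases h1 with rfl | rfl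
    · rw [one_mul]; exact key1 _ (expodd n hodd)
    · rw [show (-1 : ℝ) * (n:ℝ) = ((-n : ℤ) : ℝ) by push_cast; ring]
      exact key1 _ (expodd (-n) hodd.neg)
  · rw [mul_zero, mul_zero]
    rcases h2 with rfl | rfl
    · rw [one_mul]; exact key2 _ (expodd n hodd)
    · rw [show (-1 : ℝ) * (n:ℝ) = ((-n : ℤ) : ℝ) by push_cast; ring]
      exact key2 _ (expodd (-n) hodd.neg)
end

section
/- For every positive even integer n: the image σ^T(V_{n,0,0}) is the one-dimensional ℂ-linear span of the function (x,y,z) ↦ cos(2πnx) + cos(2πny), and the image σ^T(V_{0,0,n}) is the two-dimensional ℂ-linear span of the functions (x,y,z) ↦ exp(2πinz) and (x,y,z) ↦ exp(−2πinz). -/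
noncomputable section

open Real

/-- Auxiliary: the cosine-sum function. -/
def gfun (a : ℝ) : FunSp := fun p : R3 =>
  ((Real.cos (2 * Real.pi * a * p.1) + Real.cos (2 * Real.pi * a * p.2.1) : ℝ) : ℂ)

end

lemma sigmaT_apply (f : FunSp) (p : R3) :
    sigmaT f p = 4⁻¹ * (f p + f (tauMap p) + f (tauMap (tauMap p))
      + f (tauMap (tauMap (tauMap p)))) := rfl

lemma phi_x_tau (a : ℝ) (p : R3) : phi a 0 0 (tauMap p) = phi 0 (-a) 0 p := by
  simp only [phi, tauMap]; congr 1; push_cast; ring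

lemma phi_y_tau (b : ℝ) (p : R3) : phi 0 b 0 (tauMap p) = phi b 0 0 p := by
  simp only [phi, tauMap]; congr 1; push_cast; ring

lemma phi_z_tau (c : ℝ) (p : R3) :
    phi 0 0 c (tauMap p) = Complex.exp (Real.pi * Complex.I * c) * phi 0 0 c p := by
  simp only [phi, tauMap]; rw [← Complex.exp_add]; congr 1; push_cast; ring

lemma cos_sum (a x : ℝ) : ((Real.cos (2 * Real.pi * a * x) : ℝ) : ℂ)
    = 2⁻¹ * (phi a 0 0 (x, 0, 0) + phi (-a) 0 0 (x, 0, 0)) := by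
  rw [Complex.ofReal_cos]
  show Complex.cos _ = _
  rw [Complex.cos]
  simp only [phi]
  rw [show ((2 * Real.pi * a * x : ℝ) : ℂ) * Complex.I
      = 2 * (Real.pi : ℂ) * Complex.I * ((a:ℂ) * (x:ℂ) + 0 * 0 + 0 * 0) by push_cast; ring,
    show -((2 * Real.pi * a * x : ℝ) : ℂ) * Complex.I
      = 2 * (Real.pi : ℂ) * Complex.I * (((-a:ℝ):ℂ) * (x:ℂ) + 0 * 0 + 0 * 0) by push_cast; ring]
  push_cast
  ring

lemma phi_x_val (a : ℝ) (p : R3) : phi a 0 0 p = phi a 0 0 (p.1, 0, 0) := by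
  simp only [phi]; norm_num

lemma phi_y_val (b : ℝ) (p : R3) : phi 0 b 0 p = phi b 0 0 (p.2.1, 0, 0) := by
  simp only [phi]; congr 1; push_cast; ring

lemma sigmaT_phi_x (a : ℝ) : sigmaT (phi a 0 0) = (2⁻¹ : ℂ) • gfun a := by
  funext p
  rw [sigmaT_apply]
  simp only [phi_x_tau, phi_y_tau, neg_neg]
  simp only [Pi.smul_apply, smul_eq_mul, gfun, Complex.ofReal_add, cos_sum, neg_neg]
  rw [phi_x_val a p, phi_x_val (-a) p, phi_y_val (-a) p, phi_y_val a p]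
  ring

lemma sigmaT_phi_y (b : ℝ) : sigmaT (phi 0 b 0) = (2⁻¹ : ℂ) • gfun b := by
  funext p
  rw [sigmaT_apply]
  simp only [phi_y_tau, phi_x_tau, neg_neg]
  simp only [Pi.smul_apply, smul_eq_mul, gfun, Complex.ofReal_add, cos_sum, neg_neg]
  rw [phi_x_val b p, phi_x_val (-b) p, phi_y_val (-b) p, phi_y_val b p]
  ring

lemma sigmaT_phi_z (c : ℝ) (k : ℤ) (hc : c = 2 * k) : sigmaT (phi 0 0 c) = phi 0 0 c := by
  have he : Complex.exp (Real.pi * Complex.I * c) = 1 := by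
    rw [show ((Real.pi : ℂ) * Complex.I * (c:ℂ)) = (k:ℂ) * (2 * Real.pi * Complex.I) by
      rw [hc]; push_cast; ring]
    exact Complex.exp_int_mul_two_pi_mul_I k
  funext p
  rw [sigmaT_apply]
  simp only [phi_z_tau, he, one_mul]
  ring

lemma gfun_neg (a : ℝ) : gfun (-a) = gfun a := by
  funext p
  simp only [gfun]
  rw [show 2 * Real.pi * (-a) * p.1 = -(2 * Real.pi * a * p.1) by ring,
    show 2 * Real.pi * (-a) * p.2.1 = -(2 * Real.pi * a * p.2.1) by ring,
    Real.cos_neg, Real.cos_neg]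

/-- for a positive even integer `n`, the image `σ^T(V_{n,0,0})` is the
one-dimensional span of `cos(2πnx) + cos(2πny)`, and `σ^T(V_{0,0,n})` is the
two-dimensional span of `exp(2πinz)` and `exp(−2πinz)`. -/
theorem sigmaT_even (n : ℤ) (hn : 0 < n) (heven : Even n) :
    (Submodule.map sigmaT (Vspace (n : ℝ) 0 0) =
        Submodule.span ℂ
          {fun p : R3 => ((Real.cos (2 * Real.pi * (n : ℝ) * p.1)
            + Real.cos (2 * Real.pi * (n : ℝ) * p.2.1) : ℝ) : ℂ)} ∧
      Module.finrank ℂ ↥(Submodule.map sigmaT (Vspace (n : ℝ) 0 0)) = 1) ∧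
    (Submodule.map sigmaT (Vspace 0 0 (n : ℝ)) =
        Submodule.span ℂ
          {fun p : R3 => Complex.exp (2 * (Real.pi : ℂ) * Complex.I * (n : ℂ) * (p.2.2 : ℂ)),
           fun p : R3 => Complex.exp (-(2 * (Real.pi : ℂ) * Complex.I * (n : ℂ) * (p.2.2 : ℂ)))} ∧
      Module.finrank ℂ ↥(Submodule.map sigmaT (Vspace 0 0 (n : ℝ))) = 2) := by
  obtain ⟨m, hm⟩ := heven
  -- Part 1
  have e1 : Submodule.map sigmaT (Vspace (n : ℝ) 0 0) = Submodule.span ℂ {gfun (n : ℝ)} := by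
    rw [Vspace, Submodule.map_span]
    apply le_antisymm
    · rw [Submodule.span_le]
      rintro _ ⟨f, ⟨s₁, s₂, s₃, h1, h2, h3, hf | hf⟩, rfl⟩ <;> subst hf <;>
        simp only [mul_zero, zero_mul]
      · rw [sigmaT_phi_x]
        have hg : gfun (s₁ * (n:ℝ)) = gfun (n:ℝ) := by
          rcases h1 with rfl | rfl
          · rw [one_mul]
          · rw [show (-1 : ℝ) * (n:ℝ) = -((n:ℝ)) by ring, gfun_neg]
        rw [hg]
        exact Submodule.smul_mem _ _ (Submodule.subset_span rfl)
      · rw [sigmaT_phi_y]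
        have hg : gfun (s₂ * (n:ℝ)) = gfun (n:ℝ) := by
          rcases h2 with rfl | rfl
          · rw [one_mul]
          · rw [show (-1 : ℝ) * (n:ℝ) = -((n:ℝ)) by ring, gfun_neg]
        rw [hg]
        exact Submodule.smul_mem _ _ (Submodule.subset_span rfl)
    · rw [Submodule.span_le]
      rintro f hf
      rw [Set.mem_singleton_iff] at hf
      subst hf
      have hmem : phi (n:ℝ) 0 0 ∈ {f : FunSp | ∃ s₁ s₂ s₃ : ℝ,
          s₁ ∈ ({1, -1} : Set ℝ) ∧ s₂ ∈ ({1, -1} : Set ℝ) ∧ s₃ ∈ ({1, -1} : Set ℝ) ∧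
          (f = phi (s₁ * (n:ℝ)) (s₂ * 0) (s₃ * 0) ∨ f = phi (s₁ * 0) (s₂ * (n:ℝ)) (s₃ * 0))} :=
        ⟨1, 1, 1, Or.inl rfl, Or.inl rfl, Or.inl rfl, Or.inl (by norm_num)⟩
      have h2 : sigmaT (phi (n:ℝ) 0 0) ∈ Submodule.span ℂ (sigmaT '' _) :=
        Submodule.subset_span (Set.mem_image_of_mem _ hmem)
      have h3 : gfun (n:ℝ) = (2:ℂ) • sigmaT (phi (n:ℝ) 0 0) := by
        rw [sigmaT_phi_x, smul_smul]; norm_num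
      rw [h3]
      exact Submodule.smul_mem _ _ h2
  have hgne : gfun (n:ℝ) ≠ 0 := by
    intro h
    have h0 := congrFun h (0, 0, 0)
    simp [gfun] at h0
  -- Part 2
  have hp : phi 0 0 ((n:ℝ)) = (fun p : R3 =>
      Complex.exp (2 * (Real.pi : ℂ) * Complex.I * (n : ℂ) * (p.2.2 : ℂ))) := by
    funext p; simp only [phi]; congr 1; push_cast; ring
  have hq : phi 0 0 (-(n:ℝ)) = (fun p : R3 =>
      Complex.exp (-(2 * (Real.pi : ℂ) * Complex.I * (n : ℂ) * (p.2.2 : ℂ)))) := by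
    funext p; simp only [phi]; congr 1; push_cast; ring
  have hzp : sigmaT (phi 0 0 ((n:ℝ))) = phi 0 0 ((n:ℝ)) :=
    sigmaT_phi_z _ m (by push_cast [hm]; ring)
  have hzm : sigmaT (phi 0 0 (-(n:ℝ))) = phi 0 0 (-(n:ℝ)) :=
    sigmaT_phi_z _ (-m) (by push_cast [hm]; ring)
  have e2 : Submodule.map sigmaT (Vspace 0 0 (n : ℝ)) =
      Submodule.span ℂ
        {fun p : R3 => Complex.exp (2 * (Real.pi : ℂ) * Complex.I * (n : ℂ) * (p.2.2 : ℂ)),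
         fun p : R3 => Complex.exp (-(2 * (Real.pi : ℂ) * Complex.I * (n : ℂ) * (p.2.2 : ℂ)))} := by
    rw [Vspace, Submodule.map_span]
    apply le_antisymm
    · rw [Submodule.span_le]
      rintro _ ⟨f, ⟨s₁, s₂, s₃, h1, h2, h3, hf | hf⟩, rfl⟩ <;> subst hf <;>
          simp only [mul_zero, zero_mul] <;>
        · rcases h3 with rfl | rfl
          · rw [one_mul, hzp, hp]
            exact Submodule.subset_span (Set.mem_insert _ _)
          · rw [show (-1 : ℝ) * (n:ℝ) = -((n:ℝ)) by ring, hzm, hq]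
            exact Submodule.subset_span (Set.mem_insert_of_mem _ rfl)
    · rw [Submodule.span_le]
      rintro f hf
      rcases hf with rfl | hf
      · rw [← hp, ← hzp]
        exact Submodule.subset_span (Set.mem_image_of_mem _
          ⟨1, 1, 1, Or.inl rfl, Or.inl rfl, Or.inl rfl, Or.inl (by norm_num)⟩)
      · rw [Set.mem_singleton_iff] at hf
        subst hf
        rw [← hq, ← hzm]
        exact Submodule.subset_span (Set.mem_image_of_mem _
          ⟨1, 1, -1, Or.inl rfl, Or.inl rfl, Or.inr rfl, Or.inl (by norm_num)⟩)
  -- linear independence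
  have hne : (n:ℂ) ≠ 0 := by exact_mod_cast hn.ne'
  have hI : Complex.exp (2 * (Real.pi : ℂ) * Complex.I * (n : ℂ)
      * (((1/(4*(n:ℝ)) : ℝ)) : ℂ)) = Complex.I := by
    rw [show 2 * (Real.pi : ℂ) * Complex.I * (n : ℂ) * (((1/(4*(n:ℝ)) : ℝ)) : ℂ)
        = ((Real.pi:ℂ)/2) * Complex.I by push_cast; field_simp; ring]
    rw [Complex.exp_mul_I]; simp
  have hmI : Complex.exp (-(2 * (Real.pi : ℂ) * Complex.I * (n : ℂ)
      * (((1/(4*(n:ℝ)) : ℝ)) : ℂ))) = -Complex.I := by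
    rw [Complex.exp_neg, hI, Complex.inv_I]
  have hli : LinearIndependent ℂ
      ![(fun p : R3 => Complex.exp (2 * (Real.pi : ℂ) * Complex.I * (n : ℂ) * (p.2.2 : ℂ))),
        (fun p : R3 => Complex.exp (-(2 * (Real.pi : ℂ) * Complex.I * (n : ℂ) * (p.2.2 : ℂ))))] := by
    rw [LinearIndependent.pair_iff]
    intro s t hst
    have h0 := congrFun hst (0, 0, 0)
    have h1 := congrFun hst (0, 0, (1/(4*(n:ℝ)) : ℝ))
    simp only [Pi.add_apply, Pi.smul_apply, Pi.zero_apply, smul_eq_mul] at h0 h1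
    rw [hI, hmI] at h1
    simp only [Complex.ofReal_zero, mul_zero, Complex.exp_zero, mul_one, neg_zero] at h0
    have hst' : (s - t) * Complex.I = 0 := by linear_combination h1
    have h3 : s - t = 0 := by
      rcases mul_eq_zero.mp hst' with h | h
      · exact h
      · exact absurd h Complex.I_ne_zero
    constructor
    · linear_combination (h0 + h3) / 2
    · linear_combination (h0 - h3) / 2
  have hrange : ({(fun p : R3 => Complex.exp (2 * (Real.pi : ℂ) * Complex.I * (n : ℂ) * (p.2.2 : ℂ))),
      (fun p : R3 => Complex.exp (-(2 * (Real.pi : ℂ) * Complex.I * (n : ℂ) * (p.2.2 : ℂ))))} : Set FunSp)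
      = Set.range ![(fun p : R3 => Complex.exp (2 * (Real.pi : ℂ) * Complex.I * (n : ℂ) * (p.2.2 : ℂ))),
        (fun p : R3 => Complex.exp (-(2 * (Real.pi : ℂ) * Complex.I * (n : ℂ) * (p.2.2 : ℂ))))] := by
    simp [Set.pair_comm]
  refine ⟨⟨e1, ?_⟩, e2, ?_⟩
  · rw [e1]
    exact finrank_span_singleton hgne
  · rw [e2, hrange, finrank_span_eq_card hli]
    simp
end

section
/- For every positive even integer n: the image σ^D(V_{n,0,0}) is the two-dimensional ℂ-linear span of the functions (x,y,z) ↦ cos(2πnx) and (x,y,z) ↦ cos(2πny), and the image σ^D(V_{0,0,n}) is the one-dimensional ℂ-linear span of the function (x,y,z) ↦ cos(2πnz). -/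
noncomputable section Aux

open Real Complex

lemma sigmaD_apply (f : FunSp) (p : R3) :
    sigmaD f p = 4⁻¹ * (f p + f (rhoxMap p) + f (rhoyMap p) + f (rhozMap p)) := by
  simp [sigmaD, LinearMap.funLeft_apply, mul_add]

lemma exp_one_of_int (a : ℝ) (m : ℤ) (hm : a = m) :
    Complex.exp (2 * (π : ℂ) * Complex.I * (a : ℂ)) = 1 := by
  subst hm
  rw [show 2 * (π : ℂ) * Complex.I * ((m : ℝ) : ℂ) = (m : ℂ) * (2 * π * Complex.I) by
    push_cast; ring]
  exact Complex.exp_int_mul_two_pi_mul_I m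

lemma exp_half_one (a : ℝ) (m : ℤ) (hm : a = 2 * m) :
    Complex.exp (2 * (π : ℂ) * Complex.I * ((a : ℂ) * (1/2))) = 1 := by
  subst hm
  rw [show 2 * (π : ℂ) * Complex.I * ((((2 * m : ℝ)) : ℂ) * (1/2)) = (m : ℂ) * (2 * π * Complex.I) by
    push_cast; ring]
  exact Complex.exp_int_mul_two_pi_mul_I m

lemma ofReal_cos_phi_x (a : ℝ) (p : R3) :
    ((Real.cos (2 * π * a * p.1) : ℝ) : ℂ) = (phi a 0 0 p + phi (-a) 0 0 p) / 2 := by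
  rw [Complex.ofReal_cos]
  show (Complex.exp _ + Complex.exp _) / 2 = _
  simp only [phi]
  congr 2
  · push_cast; ring
  · push_cast; ring

lemma ofReal_cos_phi_y (a : ℝ) (p : R3) :
    ((Real.cos (2 * π * a * p.2.1) : ℝ) : ℂ) = (phi 0 a 0 p + phi 0 (-a) 0 p) / 2 := by
  rw [Complex.ofReal_cos]
  show (Complex.exp _ + Complex.exp _) / 2 = _
  simp only [phi]
  congr 2
  · push_cast; ring
  · push_cast; ring

lemma ofReal_cos_phi_z (a : ℝ) (p : R3) :
    ((Real.cos (2 * π * a * p.2.2) : ℝ) : ℂ) = (phi 0 0 a p + phi 0 0 (-a) p) / 2 := by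
  rw [Complex.ofReal_cos]
  show (Complex.exp _ + Complex.exp _) / 2 = _
  simp only [phi]
  congr 2
  · push_cast; ring
  · push_cast; ring

lemma key_x (a : ℝ) (h : Complex.exp (2 * (π : ℂ) * Complex.I * ((a : ℂ) * (1/2))) = 1) :
    sigmaD (phi a 0 0) = fun p : R3 => ((Real.cos (2 * π * a * p.1) : ℝ) : ℂ) := by
  funext p
  have h1 : phi a 0 0 (rhoxMap p) =
      phi a 0 0 p * Complex.exp (2 * (π : ℂ) * Complex.I * ((a : ℂ) * (1/2))) := by
    simp only [phi, rhoxMap, ← Complex.exp_add]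
    congr 1; push_cast; ring
  have h2 : phi a 0 0 (rhoyMap p) = phi (-a) 0 0 p := by
    simp only [phi, rhoyMap]
    congr 1; push_cast; ring
  have h3 : phi a 0 0 (rhozMap p) =
      phi (-a) 0 0 p * Complex.exp (2 * (π : ℂ) * Complex.I * ((a : ℂ) * (1/2))) := by
    simp only [phi, rhozMap, ← Complex.exp_add]
    congr 1; push_cast; ring
  rw [sigmaD_apply, h1, h2, h3, h, ofReal_cos_phi_x]
  ring

lemma key_y (a : ℝ) (h : Complex.exp (2 * (π : ℂ) * Complex.I * ((a : ℂ) * (1/2))) = 1) :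
    sigmaD (phi 0 a 0) = fun p : R3 => ((Real.cos (2 * π * a * p.2.1) : ℝ) : ℂ) := by
  funext p
  have h1 : phi 0 a 0 (rhoxMap p) = phi 0 (-a) 0 p := by
    simp only [phi, rhoxMap]
    congr 1; push_cast; ring
  have h2 : phi 0 a 0 (rhoyMap p) =
      phi 0 a 0 p * Complex.exp (2 * (π : ℂ) * Complex.I * ((a : ℂ) * (1/2))) := by
    simp only [phi, rhoyMap, ← Complex.exp_add]
    congr 1; push_cast; ring
  have h3 : phi 0 a 0 (rhozMap p) =
      phi 0 (-a) 0 p * Complex.exp (2 * (π : ℂ) * Complex.I * ((a : ℂ) * (1/2))) := by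
    simp only [phi, rhozMap, ← Complex.exp_add]
    congr 1; push_cast; ring
  rw [sigmaD_apply, h1, h2, h3, h, ofReal_cos_phi_y]
  ring

lemma key_z (a : ℝ) (h : Complex.exp (2 * (π : ℂ) * Complex.I * (a : ℂ)) = 1) :
    sigmaD (phi 0 0 a) = fun p : R3 => ((Real.cos (2 * π * a * p.2.2) : ℝ) : ℂ) := by
  funext p
  have h1 : phi 0 0 a (rhoxMap p) = phi 0 0 (-a) p := by
    simp only [phi, rhoxMap]
    congr 1; push_cast; ring
  have h2 : phi 0 0 a (rhoyMap p) =
      phi 0 0 (-a) p * Complex.exp (2 * (π : ℂ) * Complex.I * (a : ℂ)) := by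
    simp only [phi, rhoyMap, ← Complex.exp_add]
    congr 1; push_cast; ring
  have h3 : phi 0 0 a (rhozMap p) =
      phi 0 0 a p * Complex.exp (2 * (π : ℂ) * Complex.I * (a : ℂ)) := by
    simp only [phi, rhozMap, ← Complex.exp_add]
    congr 1; push_cast; ring
  rw [sigmaD_apply, h1, h2, h3, h, ofReal_cos_phi_z]
  ring

end Aux

noncomputable section Main

open Real Complex Submodule

set_option maxHeartbeats 2000000 in
/-- for a positive even integer `n`, the image `σ^D(V_{n,0,0})` is the
two-dimensional span of `cos(2πnx)` and `cos(2πny)`, and `σ^D(V_{0,0,n})` is the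
one-dimensional span of `cos(2πnz)`. -/
theorem sigmaD_even (n : ℤ) (hn : 0 < n) (heven : Even n) :
    (Submodule.map sigmaD (Vspace (n : ℝ) 0 0) =
        Submodule.span ℂ
          {fun p : R3 => ((Real.cos (2 * Real.pi * (n : ℝ) * p.1) : ℝ) : ℂ),
           fun p : R3 => ((Real.cos (2 * Real.pi * (n : ℝ) * p.2.1) : ℝ) : ℂ)} ∧
      Module.finrank ℂ ↥(Submodule.map sigmaD (Vspace (n : ℝ) 0 0)) = 2) ∧
    (Submodule.map sigmaD (Vspace 0 0 (n : ℝ)) =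
        Submodule.span ℂ {fun p : R3 => ((Real.cos (2 * Real.pi * (n : ℝ) * p.2.2) : ℝ) : ℂ)} ∧
      Module.finrank ℂ ↥(Submodule.map sigmaD (Vspace 0 0 (n : ℝ))) = 1) := by
  obtain ⟨k, hk⟩ := heven
  set Cx : FunSp := fun p : R3 => ((Real.cos (2 * Real.pi * (n : ℝ) * p.1) : ℝ) : ℂ) with hCx
  set Cy : FunSp := fun p : R3 => ((Real.cos (2 * Real.pi * (n : ℝ) * p.2.1) : ℝ) : ℂ) with hCy
  set Cz : FunSp := fun p : R3 => ((Real.cos (2 * Real.pi * (n : ℝ) * p.2.2) : ℝ) : ℂ) with hCz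
  have hnne : (n : ℝ) ≠ 0 := Int.cast_ne_zero.mpr hn.ne'
  have hpos : Complex.exp (2 * (π : ℂ) * Complex.I * (((n : ℝ) : ℂ) * (1/2))) = 1 :=
    exp_half_one ((n:ℤ):ℝ) k (by push_cast [hk]; ring)
  have hneg : Complex.exp (2 * (π : ℂ) * Complex.I * ((Complex.ofReal (-(n : ℝ))) * (1/2))) = 1 :=
    exp_half_one (-((n:ℤ):ℝ)) (-k) (by push_cast [hk]; ring)
  have hposz : Complex.exp (2 * (π : ℂ) * Complex.I * (((n : ℝ)) : ℂ)) = 1 :=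
    exp_one_of_int ((n:ℤ):ℝ) n rfl
  have hnegz : Complex.exp (2 * (π : ℂ) * Complex.I * (Complex.ofReal (-(n : ℝ)))) = 1 :=
    exp_one_of_int (-((n:ℤ):ℝ)) (-n) (by push_cast; ring)
  have keyx_pos : sigmaD (phi (n : ℝ) 0 0) = Cx := key_x _ hpos
  have keyx_neg : sigmaD (phi (-(n : ℝ)) 0 0) = Cx := by
    rw [key_x _ hneg, hCx]
    funext p
    rw [show 2 * π * (-(n : ℝ)) * p.1 = -(2 * π * (n : ℝ) * p.1) by ring, Real.cos_neg]
  have keyy_pos : sigmaD (phi 0 (n : ℝ) 0) = Cy := key_y _ hpos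
  have keyy_neg : sigmaD (phi 0 (-(n : ℝ)) 0) = Cy := by
    rw [key_y _ hneg, hCy]
    funext p
    rw [show 2 * π * (-(n : ℝ)) * p.2.1 = -(2 * π * (n : ℝ) * p.2.1) by ring, Real.cos_neg]
  have keyz_pos : sigmaD (phi 0 0 (n : ℝ)) = Cz := key_z _ hposz
  have keyz_neg : sigmaD (phi 0 0 (-(n : ℝ))) = Cz := by
    rw [key_z _ hnegz, hCz]
    funext p
    rw [show 2 * π * (-(n : ℝ)) * p.2.2 = -(2 * π * (n : ℝ) * p.2.2) by ring, Real.cos_neg]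
  -- image set for V_{n,0,0}
  have himg1 : (⇑sigmaD) '' {f | ∃ s₁ s₂ s₃ : ℝ,
      s₁ ∈ ({1, -1} : Set ℝ) ∧ s₂ ∈ ({1, -1} : Set ℝ) ∧ s₃ ∈ ({1, -1} : Set ℝ) ∧
      (f = phi (s₁ * (n : ℝ)) (s₂ * 0) (s₃ * 0) ∨ f = phi (s₁ * 0) (s₂ * (n : ℝ)) (s₃ * 0))}
      = {Cx, Cy} := by
    apply Set.Subset.antisymm
    · rintro g ⟨f, ⟨s₁, s₂, s₃, hs₁, hs₂, hs₃, hf | hf⟩, rfl⟩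
      · left
        subst hf
        simp only [Set.mem_insert_iff, Set.mem_singleton_iff] at hs₁
        rcases hs₁ with h | h <;> subst h <;>
          simp only [mul_zero, one_mul, neg_one_mul] <;> [exact keyx_pos; exact keyx_neg]
      · right
        subst hf
        simp only [Set.mem_insert_iff, Set.mem_singleton_iff] at hs₂
        rcases hs₂ with h | h <;> subst h <;>
          simp only [mul_zero, one_mul, neg_one_mul, zero_mul] <;>
          [exact keyy_pos; exact keyy_neg]
    · rintro g (rfl | rfl)
      · exact ⟨phi (1 * (n : ℝ)) ((1 : ℝ) * 0) ((1 : ℝ) * 0),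
          ⟨1, 1, 1, Or.inl rfl, Or.inl rfl, Or.inl rfl, Or.inl rfl⟩,
          by simp only [mul_zero, one_mul]; exact keyx_pos⟩
      · exact ⟨phi ((1 : ℝ) * 0) (1 * (n : ℝ)) ((1 : ℝ) * 0),
          ⟨1, 1, 1, Or.inl rfl, Or.inl rfl, Or.inl rfl, Or.inr rfl⟩,
          by simp only [mul_zero, one_mul, zero_mul]; exact keyy_pos⟩
  have himg2 : (⇑sigmaD) '' {f | ∃ s₁ s₂ s₃ : ℝ,
      s₁ ∈ ({1, -1} : Set ℝ) ∧ s₂ ∈ ({1, -1} : Set ℝ) ∧ s₃ ∈ ({1, -1} : Set ℝ) ∧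
      (f = phi (s₁ * 0) (s₂ * 0) (s₃ * (n : ℝ)) ∨ f = phi (s₁ * 0) (s₂ * 0) (s₃ * (n : ℝ)))}
      = {Cz} := by
    apply Set.Subset.antisymm
    · rintro g ⟨f, ⟨s₁, s₂, s₃, hs₁, hs₂, hs₃, hf | hf⟩, rfl⟩ <;>
      · subst hf
        simp only [Set.mem_insert_iff, Set.mem_singleton_iff] at hs₃
        rcases hs₃ with h | h <;> subst h <;>
          simp only [mul_zero, zero_mul, one_mul, neg_one_mul] <;>
          [exact keyz_pos; exact keyz_neg]
    · rintro g rfl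
      exact ⟨phi ((1 : ℝ) * 0) ((1 : ℝ) * 0) (1 * (n : ℝ)),
        ⟨1, 1, 1, Or.inl rfl, Or.inl rfl, Or.inl rfl, Or.inl rfl⟩,
        by simp only [mul_zero, one_mul, zero_mul]; exact keyz_pos⟩
  have hmap1 : Submodule.map sigmaD (Vspace (n : ℝ) 0 0) = Submodule.span ℂ {Cx, Cy} := by
    rw [Vspace, Submodule.map_span, himg1]
  have hmap2 : Submodule.map sigmaD (Vspace 0 0 (n : ℝ)) = Submodule.span ℂ {Cz} := by
    rw [Vspace, Submodule.map_span, himg2]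
  -- linear independence of Cx, Cy
  have hli : LinearIndependent ℂ ![Cx, Cy] := by
    rw [LinearIndependent.pair_iff]
    intro s t hst
    have h0 := congrFun hst (0, 0, 0)
    have h1 := congrFun hst ((2 * (n : ℝ))⁻¹, 0, 0)
    simp only [hCx, hCy, Pi.add_apply, Pi.smul_apply, Pi.zero_apply, smul_eq_mul,
      mul_zero, Real.cos_zero] at h0 h1
    rw [show 2 * π * (n : ℝ) * (2 * (n : ℝ))⁻¹ = π by field_simp] at h1
    rw [Real.cos_pi] at h1
    push_cast at h0 h1
    exact ⟨by linear_combination (h0 - h1) / 2, by linear_combination (h0 + h1) / 2⟩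
  have hfr1 : Module.finrank ℂ ↥(Submodule.span ℂ ({Cx, Cy} : Set FunSp)) = 2 := by
    rw [show ({Cx, Cy} : Set FunSp) = Set.range ![Cx, Cy] by
      rw [Matrix.range_cons_cons_empty]]
    rw [finrank_span_eq_card hli, Fintype.card_fin]
  have hCz_ne : Cz ≠ 0 := by
    intro h
    have := congrFun h (0, 0, 0)
    simp [hCz] at this
  have hfr2 : Module.finrank ℂ ↥(Submodule.span ℂ ({Cz} : Set FunSp)) = 1 :=
    finrank_span_singleton hCz_ne
  exact ⟨⟨hmap1, by rw [hmap1]; exact hfr1⟩, ⟨hmap2, by rw [hmap2]; exact hfr2⟩⟩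

end Main
end

section
/- Heat-trace identity relating Tetra to its torus cover and to circles (the 'effective one-dimensionality' K_Tetra − (1/4)K_TwoTall = K_{ℝ/(1/2)ℤ} − (1/4)K_{ℝ/2ℤ}): for every real t > 0, (∑'_{μ ∈ ℝ} m_T(μ) · exp(−4π²μt)) − (1/4) · ∑'_{(a,b,c) ∈ ℤ³} exp(−4π²(a² + b² + c²/4)t) = (∑'_{n ∈ ℤ} exp(−16π²n²t)) − (1/4) · ∑'_{n ∈ ℤ} exp(−π²n²t), where all sums are tsums and the left-hand tsum over μ ∈ ℝ has countable support and is summable. -/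
/-- `E_μ`: the ℂ-span of the `φ_{(a,b,c)}` with `(a,b,c) ∈ ℤ × ℤ × (1/2)ℤ` and
`a² + b² + c² = μ`. -/
noncomputable def Espace (μ : ℝ) : Submodule ℂ FunSp :=
  Submodule.span ℂ {f | ∃ a b c : ℝ, (∃ m : ℤ, a = (m : ℝ)) ∧ (∃ m : ℤ, b = (m : ℝ)) ∧
    (∃ m : ℤ, c = (m : ℝ) / 2) ∧ a ^ 2 + b ^ 2 + c ^ 2 = μ ∧ f = phi a b c}

/-- The subspace of functions invariant under `τ` (i.e. `f ∘ τ = f`). -/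
noncomputable def fixT : Submodule ℂ FunSp :=
  LinearMap.eqLocus (LinearMap.funLeft ℂ ℂ tauMap) LinearMap.id

/-- The subspace of functions invariant under `ρ_x`. -/
noncomputable def fixX : Submodule ℂ FunSp :=
  LinearMap.eqLocus (LinearMap.funLeft ℂ ℂ rhoxMap) LinearMap.id

/-- The subspace of functions invariant under `ρ_y`. -/
noncomputable def fixY : Submodule ℂ FunSp :=
  LinearMap.eqLocus (LinearMap.funLeft ℂ ℂ rhoyMap) LinearMap.id

/-- The spectral multiplicity function of Tetra: `m_T(μ)` is the dimension of the
`τ`-invariant part of `E_μ`, so that `4π²μ` runs over the Laplace eigenvalues of Tetra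
with multiplicity `m_T(μ)`. -/
noncomputable def mT (μ : ℝ) : ℕ := Module.finrank ℂ ↥(Espace μ ⊓ fixT)

/-! Composing with `τ` sends the character of frequency `(a, b, m/2)` to `i^m` times the
character of the rotated frequency `(b, -a, m/2)`. The characters being linearly independent, the
`τ`-invariant part of `E_μ` has a basis indexed by the rotation orbits of norm `μ` around which
the phases close up: all orbits of size four, and the fixed points `(0, 0, m)` with `4 ∣ m`.
So `m_T(μ)` counts the points of norm `μ` with `a > 0, b ≥ 0` or `a = b = 0, 4 ∣ m`. In the heat
trace the first kind contributes a quarter of the torus sum with the `z`-axis removed, the second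
the circle sum `∑ exp(-16π²n²t)`. -/

open Real Finset
open Complex (I)

noncomputable section

namespace Tetra

/-- The triple `(a, b, m)` stands for the frequency `(a, b, m / 2) ∈ L*`. -/
def latticeChar (w : ℤ × ℤ × ℤ) : FunSp := phi w.1 w.2.1 ((w.2.2 : ℝ) / 2)

def normSq (w : ℤ × ℤ × ℤ) : ℝ := (w.1 : ℝ) ^ 2 + (w.2.1 : ℝ) ^ 2 + (w.2.2 : ℝ) ^ 2 / 4

def rot (w : ℤ × ℤ × ℤ) : ℤ × ℤ × ℤ := (w.2.1, -w.1, w.2.2)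

def phase (w : ℤ × ℤ × ℤ) : ℂ := I ^ w.2.2

section Characters

lemma eq_of_forall_cexp_eq {a b : ℝ}
    (h : ∀ x : ℝ, Complex.exp (2 * π * I * (a * x)) = Complex.exp (2 * π * I * (b * x))) :
    a = b := by
  by_contra hab
  have h2πI : (2 * π * I : ℂ) ≠ 0 := by simp [pi_ne_zero]
  have hint : ∀ x : ℝ, ∃ n : ℤ, (a - b) * x = n := fun x => by
    obtain ⟨n, hn⟩ := Complex.exp_eq_exp_iff_exists_int.mp (h x)
    have : (((a - b) * x : ℝ) : ℂ) = n :=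
      mul_left_cancel₀ h2πI (by push_cast; linear_combination hn)
    exact ⟨n, by exact_mod_cast this⟩
  obtain ⟨n, hn⟩ := hint (1 / (2 * (a - b)))
  field_simp [sub_ne_zero.mpr hab] at hn
  have : 1 = 2 * n := by exact_mod_cast hn
  omega

lemma phi_injective {a b c a' b' c' : ℝ} (h : phi a b c = phi a' b' c') :
    a = a' ∧ b = b' ∧ c = c' := by
  refine ⟨eq_of_forall_cexp_eq fun x => ?_, eq_of_forall_cexp_eq fun x => ?_,
    eq_of_forall_cexp_eq fun x => ?_⟩
  · simpa [phi] using congrFun h (x, 0, 0)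
  · simpa [phi] using congrFun h (0, x, 0)
  · simpa [phi] using congrFun h (0, 0, x)

def phiHom (a b c : ℝ) : Multiplicative R3 →* ℂ where
  toFun p := phi a b c p.toAdd
  map_one' := by simp [phi]
  map_mul' p q := by
    simp only [phi, toAdd_mul, Prod.fst_add, Prod.snd_add, Complex.ofReal_add, ← Complex.exp_add]
    ring_nf

lemma linearIndependent_latticeChar : LinearIndependent ℂ latticeChar := by
  have hinj : Function.Injective fun w : ℤ × ℤ × ℤ => phiHom w.1 w.2.1 ((w.2.2 : ℝ) / 2) := by
    intro w w' h
    obtain ⟨h₁, h₂, h₃⟩ := phi_injective (congrArg DFunLike.coe h)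
    ext <;> simp_all
  exact (linearIndependent_monoidHom (Multiplicative R3) ℂ).comp _ hinj

lemma phi_comp_tauMap (a b c : ℝ) :
    phi a b c ∘ tauMap = Complex.exp (π * I * c) • phi b (-a) c := by
  funext p
  simp only [Function.comp_apply, Pi.smul_apply, smul_eq_mul, phi, tauMap, ← Complex.exp_add]
  push_cast
  ring_nf

lemma phase_eq_exp (w : ℤ × ℤ × ℤ) : phase w = Complex.exp (π * I * ((w.2.2 : ℝ) / 2 : ℝ)) := by
  conv_lhs => rw [phase, ← Complex.exp_pi_div_two_mul_I, ← Complex.exp_int_mul]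
  push_cast
  ring_nf

lemma latticeChar_comp_tauMap (w : ℤ × ℤ × ℤ) :
    latticeChar w ∘ tauMap = phase w • latticeChar (rot w) := by
  rw [latticeChar, phi_comp_tauMap, phase_eq_exp, latticeChar, rot, Int.cast_neg]

end Characters

section Orbits

def zAxis : Set (ℤ × ℤ × ℤ) := {w | w.1 = 0 ∧ w.2.1 = 0}

def quadrant : Set (ℤ × ℤ × ℤ) := {w | 0 < w.1 ∧ 0 ≤ w.2.1}

def zAxisFixed : Set (ℤ × ℤ × ℤ) := {w | w.1 = 0 ∧ w.2.1 = 0 ∧ 4 ∣ w.2.2}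

/-- One point from each `rot`-orbit that carries a `τ`-invariant vector: the orbits of size
four all do, a fixed point `(0, 0, m)` only when its phase `I ^ m` is `1`. -/
def orbitReps : Set (ℤ × ℤ × ℤ) := zAxisFixed ∪ quadrant

lemma zAxisFixed_subset_zAxis : zAxisFixed ⊆ zAxis := fun _ hw => ⟨hw.1, hw.2.1⟩

lemma disjoint_zAxis_quadrant : Disjoint zAxis quadrant :=
  Set.disjoint_left.mpr fun _ h₁ h₂ => h₂.1.ne' h₁.1

lemma rot_iterate_one (w : ℤ × ℤ × ℤ) : rot^[1] w = (w.2.1, -w.1, w.2.2) := rfl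

lemma rot_iterate_two (w : ℤ × ℤ × ℤ) : rot^[2] w = (-w.1, -w.2.1, w.2.2) := rfl

lemma rot_iterate_three (w : ℤ × ℤ × ℤ) : rot^[3] w = (-w.2.1, w.1, w.2.2) := by
  simp [rot]

lemma rot_iterate_four (w : ℤ × ℤ × ℤ) : rot^[4] w = w := by
  simp [rot]

lemma rot_iterate_of_mem_zAxis {w : ℤ × ℤ × ℤ} (hw : w ∈ zAxis) (j : ℕ) : rot^[j] w = w :=
  Function.iterate_fixed (by obtain ⟨a, b, m⟩ := w; obtain ⟨rfl, rfl⟩ := hw; simp [rot]) j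

lemma exists_mem_quadrant_rot_iterate_eq {w : ℤ × ℤ × ℤ} (hw : w ∉ zAxis) :
    ∃ k ∈ quadrant, ∃ j < 4, rot^[j] k = w := by
  obtain ⟨a, b, m⟩ := w
  simp only [zAxis, Set.mem_ofPred_eq, not_and_or] at hw
  by_cases h₀ : 0 < a ∧ 0 ≤ b
  · exact ⟨(a, b, m), h₀, 0, by norm_num, rfl⟩
  by_cases h₁ : 0 ≤ a ∧ b < 0
  · exact ⟨(-b, a, m), ⟨show 0 < -b by omega, h₁.1⟩, 1, by norm_num, by simp [rot]⟩
  by_cases h₂ : a < 0 ∧ b ≤ 0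
  · exact ⟨(-a, -b, m), ⟨show 0 < -a by omega, show 0 ≤ -b by omega⟩, 2, by norm_num,
      by simp [rot_iterate_two]⟩
  · exact ⟨(b, -a, m), ⟨show 0 < b by omega, show 0 ≤ -a by omega⟩, 3, by norm_num,
      by simp [rot_iterate_three]⟩

lemma eq_and_eq_of_rot_iterate_eq {k k' : ℤ × ℤ × ℤ} (hk : k ∈ quadrant) (hk' : k' ∈ quadrant)
    {i j : ℕ} (hi : i < 4) (hj : j < 4) (h : rot^[i] k = rot^[j] k') : i = j ∧ k = k' := by
  obtain ⟨a, b, m⟩ := k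
  obtain ⟨a', b', m'⟩ := k'
  obtain ⟨ha, hb⟩ := hk
  obtain ⟨ha', hb'⟩ := hk'
  dsimp only at ha hb ha' hb'
  interval_cases i <;> interval_cases j <;>
    simp only [Function.iterate_zero_apply, rot_iterate_one, rot_iterate_two, rot_iterate_three,
      Prod.mk.injEq, true_and] at h ⊢ <;> omega

lemma rot_iterate_not_mem_zAxis {k : ℤ × ℤ × ℤ} (hk : k ∈ quadrant) {j : ℕ} (hj : j < 4) :
    rot^[j] k ∉ zAxis := by
  obtain ⟨a, b, m⟩ := k
  obtain ⟨ha, hb⟩ := hk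
  dsimp only at ha hb
  interval_cases j <;>
    simp only [zAxis, Set.mem_ofPred_eq, Function.iterate_zero_apply, rot_iterate_one,
      rot_iterate_two, rot_iterate_three] <;> omega

lemma eq_of_rot_iterate_eq_of_mem_orbitReps {k k' : ℤ × ℤ × ℤ} (hk : k ∈ orbitReps)
    (hk' : k' ∈ orbitReps) {j : ℕ} (hj : j < 4) (h : rot^[j] k = k') : k = k' := by
  rcases hk with hk | hk
  · rwa [rot_iterate_of_mem_zAxis (zAxisFixed_subset_zAxis hk)] at h
  rcases hk' with hk' | hk'
  · exact absurd (h ▸ zAxisFixed_subset_zAxis hk') (rot_iterate_not_mem_zAxis hk hj)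
  · exact (eq_and_eq_of_rot_iterate_eq hk hk' hj four_pos h).2

def quadrantOrbitEquiv : Fin 4 × quadrant ≃ (zAxisᶜ : Set (ℤ × ℤ × ℤ)) :=
  Equiv.ofBijective (fun p => ⟨rot^[p.1] p.2, rot_iterate_not_mem_zAxis p.2.2 p.1.2⟩) <| by
    refine ⟨fun p q h => ?_, fun w => ?_⟩
    · obtain ⟨hij, hk⟩ :=
        eq_and_eq_of_rot_iterate_eq p.2.2 q.2.2 p.1.2 q.1.2 (congrArg Subtype.val h)
      exact Prod.ext (Fin.ext hij) (Subtype.ext hk)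
    · obtain ⟨k, hk, j, hj, hw⟩ := exists_mem_quadrant_rot_iterate_eq w.2
      exact ⟨(⟨j, hj⟩, ⟨k, hk⟩), Subtype.ext hw⟩

end Orbits

section InvariantVectors

lemma apply_rot_iterate {β : Type*} {g : ℤ × ℤ × ℤ → β} (hg : ∀ w, g (rot w) = g w) (j : ℕ)
    (w : ℤ × ℤ × ℤ) : g (rot^[j] w) = g w := by
  induction j generalizing w with
  | zero => rfl
  | succ j ih => rw [Function.iterate_succ_apply, ih, hg]

lemma normSq_rot (w : ℤ × ℤ × ℤ) : normSq (rot w) = normSq w := by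
  simp only [normSq, rot, Int.cast_neg]
  ring

lemma phase_rot (w : ℤ × ℤ × ℤ) : phase (rot w) = phase w := rfl

lemma phase_ne_zero (w : ℤ × ℤ × ℤ) : phase w ≠ 0 := zpow_ne_zero _ Complex.I_ne_zero

lemma phase_eq_one_iff {w : ℤ × ℤ × ℤ} : phase w = 1 ↔ 4 ∣ w.2.2 :=
  Complex.isPrimitiveRoot_I.zpow_eq_one_iff_dvd _

lemma phase_pow_four (w : ℤ × ℤ × ℤ) : phase w ^ 4 = 1 := by
  rw [phase, ← zpow_natCast, ← zpow_mul, Complex.isPrimitiveRoot_I.zpow_eq_one_iff_dvd]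
  exact dvd_mul_left _ _

lemma latticeChar_comp_tauMap_iterate (w : ℤ × ℤ × ℤ) (j : ℕ) :
    latticeChar w ∘ tauMap^[j] = phase w ^ j • latticeChar (rot^[j] w) := by
  induction j with
  | zero => simp
  | succ j ih =>
    rw [Function.iterate_succ, ← Function.comp_assoc, ih, Pi.smul_comp, latticeChar_comp_tauMap,
      apply_rot_iterate phase_rot, smul_smul, ← pow_succ, Function.iterate_succ_apply']

lemma sigmaT_apply (f : FunSp) : sigmaT f = (4⁻¹ : ℂ) • ∑ j ∈ range 4, f ∘ tauMap^[j] := by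
  simp only [sigmaT, LinearMap.smul_apply, LinearMap.add_apply, LinearMap.id_apply,
    sum_range_succ, range_one, sum_singleton]
  rfl

lemma sigmaT_eq_self_of_mem_fixT {f : FunSp} (hf : f ∈ fixT) : sigmaT f = f := by
  have hτ : ∀ j, f ∘ tauMap^[j] = f := fun j => by
    induction j with
    | zero => rfl
    | succ j ih => rw [Function.iterate_succ, ← Function.comp_assoc, ih]; exact hf
  simp only [sigmaT_apply, hτ, sum_const, card_range, ← Nat.cast_smul_eq_nsmul ℂ, smul_smul]
  norm_num

def orbitCoeff (w : ℤ × ℤ × ℤ) : (ℤ × ℤ × ℤ) →₀ ℂ :=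
  ∑ j ∈ range 4, Finsupp.single (rot^[j] w) (phase w ^ j)

def orbitVec (w : ℤ × ℤ × ℤ) : FunSp := Finsupp.linearCombination ℂ latticeChar (orbitCoeff w)

lemma orbitVec_eq_sum (w : ℤ × ℤ × ℤ) :
    orbitVec w = ∑ j ∈ range 4, phase w ^ j • latticeChar (rot^[j] w) := by
  simp [orbitVec, orbitCoeff, Finsupp.linearCombination_single]

lemma sigmaT_latticeChar (w : ℤ × ℤ × ℤ) : sigmaT (latticeChar w) = (4⁻¹ : ℂ) • orbitVec w := by
  simp only [sigmaT_apply, latticeChar_comp_tauMap_iterate, orbitVec_eq_sum]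

lemma sum_range_shift_of_eq {M : Type*} [AddCancelCommMonoid M] (F : ℕ → M) {n : ℕ}
    (h : F n = F 0) : ∑ j ∈ range n, F (j + 1) = ∑ j ∈ range n, F j := by
  have := (sum_range_succ' F n).symm.trans (sum_range_succ F n)
  rw [h] at this
  exact add_right_cancel this

lemma phase_smul_orbitVec_rot (w : ℤ × ℤ × ℤ) : phase w • orbitVec (rot w) = orbitVec w := by
  simp only [orbitVec_eq_sum, smul_sum, smul_smul, phase_rot, ← pow_succ',
    ← Function.iterate_succ_apply]
  exact sum_range_shift_of_eq (fun j => phase w ^ j • latticeChar (rot^[j] w))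
    (by simp only [phase_pow_four, rot_iterate_four, pow_zero, Function.iterate_zero_apply])

lemma phase_pow_smul_orbitVec_rot_iterate (w : ℤ × ℤ × ℤ) (j : ℕ) :
    phase w ^ j • orbitVec (rot^[j] w) = orbitVec w := by
  induction j with
  | zero => simp
  | succ j ih =>
    rw [pow_succ, mul_smul, Function.iterate_succ_apply', ← apply_rot_iterate phase_rot j w,
      phase_smul_orbitVec_rot, apply_rot_iterate phase_rot, ih]

lemma orbitVec_comp_tauMap (w : ℤ × ℤ × ℤ) :
    orbitVec w ∘ tauMap = phase w • orbitVec (rot w) := by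
  change LinearMap.funLeft ℂ ℂ tauMap (orbitVec w) = _
  simp only [orbitVec_eq_sum, map_sum, map_smul, smul_sum, phase_rot]
  refine sum_congr rfl fun j _ => ?_
  rw [LinearMap.funLeft, LinearMap.coe_mk, AddHom.coe_mk, latticeChar_comp_tauMap,
    apply_rot_iterate phase_rot, smul_comm, ← Function.iterate_succ_apply' rot,
    Function.iterate_succ_apply]

lemma orbitVec_mem_fixT (w : ℤ × ℤ × ℤ) : orbitVec w ∈ fixT :=
  (orbitVec_comp_tauMap w).trans (phase_smul_orbitVec_rot w)

end InvariantVectors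

section Gaussian

lemma summable_exp_neg_mul_sq {s : ℝ} (hs : 0 < s) :
    Summable fun n : ℤ => Real.exp (-(s * n ^ 2)) := by
  refine (summable_pow_mul_jacobiTheta₂_term_bound 0 (div_pos hs pi_pos) 0).congr fun n => ?_
  rw [pow_zero, one_mul]
  congr 1
  field_simp
  ring

lemma summable_exp_neg_mul_normSq {s : ℝ} (hs : 0 < s) :
    Summable fun w : ℤ × ℤ × ℤ => Real.exp (-(s * normSq w)) := by
  have h₁ := summable_exp_neg_mul_sq hs
  have h₂ := summable_exp_neg_mul_sq (div_pos hs four_pos)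
  refine (h₁.mul_of_nonneg (h₁.mul_of_nonneg h₂ (fun _ => (Real.exp_pos _).le)
    (fun _ => (Real.exp_pos _).le)) (fun _ => (Real.exp_pos _).le)
    (fun _ => (mul_pos (Real.exp_pos _) (Real.exp_pos _)).le)).congr fun w => ?_
  simp only [← Real.exp_add, normSq]
  ring_nf

lemma finite_normSq_fiber (μ : ℝ) : (normSq ⁻¹' {μ}).Finite := by
  have hsmall := (summable_exp_neg_mul_normSq one_pos).tendsto_cofinite_zero.eventually
    (gt_mem_nhds (Real.exp_pos (-μ)))
  refine (Filter.eventually_cofinite.mp hsmall).subset fun w (hw : normSq w = μ) => ?_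
  simp [hw]

end Gaussian

section Dimension

lemma Espace_eq_span (μ : ℝ) : Espace μ = Submodule.span ℂ (latticeChar '' (normSq ⁻¹' {μ})) := by
  refine congrArg (Submodule.span ℂ) (Set.ext fun f => ⟨?_, ?_⟩)
  · rintro ⟨a, b, c, ⟨m₁, rfl⟩, ⟨m₂, rfl⟩, ⟨m₃, rfl⟩, hμ, rfl⟩
    refine ⟨(m₁, m₂, m₃), ?_, rfl⟩
    change normSq _ = μ
    rw [← hμ, normSq]
    ring
  · rintro ⟨w, hw, rfl⟩
    exact ⟨_, _, _, ⟨w.1, rfl⟩, ⟨w.2.1, rfl⟩, ⟨w.2.2, rfl⟩, by rw [← hw, normSq]; ring, rfl⟩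

lemma orbitVec_mem_Espace (w : ℤ × ℤ × ℤ) : orbitVec w ∈ Espace (normSq w) := by
  rw [orbitVec_eq_sum, Espace_eq_span]
  exact Submodule.sum_mem _ fun j _ => Submodule.smul_mem _ _
    (Submodule.subset_span ⟨_, apply_rot_iterate normSq_rot j w, rfl⟩)

lemma orbitCoeff_of_mem_zAxis {w : ℤ × ℤ × ℤ} (hw : w ∈ zAxis) :
    orbitCoeff w = Finsupp.single w (∑ j ∈ range 4, phase w ^ j) := by
  simp only [orbitCoeff, rot_iterate_of_mem_zAxis hw, Finsupp.single_finsetSum]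

lemma geom_sum_phase_eq_zero {w : ℤ × ℤ × ℤ} (hw : ¬ 4 ∣ w.2.2) :
    ∑ j ∈ range 4, phase w ^ j = 0 := by
  have hsub : phase w - 1 ≠ 0 := sub_ne_zero.mpr (phase_eq_one_iff.not.mpr hw)
  have := mul_geom_sum (phase w) 4
  rw [phase_pow_four, sub_self] at this
  exact (mul_eq_zero.mp this).resolve_left hsub

lemma orbitVec_mem_span_orbitReps {μ : ℝ} {w : ℤ × ℤ × ℤ} (hw : normSq w = μ) :
    orbitVec w ∈ Submodule.span ℂ
      (Set.range fun k : ↥(orbitReps ∩ normSq ⁻¹' {μ}) => orbitVec k) := by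
  by_cases hax : w ∈ zAxis
  · by_cases h4 : 4 ∣ w.2.2
    · exact Submodule.subset_span ⟨⟨w, Or.inl ⟨hax.1, hax.2, h4⟩, hw⟩, rfl⟩
    · rw [orbitVec, orbitCoeff_of_mem_zAxis hax, geom_sum_phase_eq_zero h4, Finsupp.single_zero,
        map_zero]
      exact Submodule.zero_mem _
  · obtain ⟨k, hk, j, -, rfl⟩ := exists_mem_quadrant_rot_iterate_eq hax
    rw [(eq_inv_smul_iff₀ (pow_ne_zero j (phase_ne_zero k))).mpr
      (phase_pow_smul_orbitVec_rot_iterate k j)]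
    refine Submodule.smul_mem _ _ (Submodule.subset_span ⟨⟨k, Or.inr hk, ?_⟩, rfl⟩)
    rw [Set.mem_preimage, ← apply_rot_iterate normSq_rot j k, hw, Set.mem_singleton_iff]

lemma Espace_inf_fixT_eq_span (μ : ℝ) :
    Espace μ ⊓ fixT = Submodule.span ℂ
      (Set.range fun k : ↥(orbitReps ∩ normSq ⁻¹' {μ}) => orbitVec k) := by
  refine le_antisymm (fun f hf => ?_) (Submodule.span_le.mpr ?_)
  · obtain ⟨hfE, hfT⟩ := Submodule.mem_inf.mp hf
    rw [Espace_eq_span] at hfE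
    rw [← sigmaT_eq_self_of_mem_fixT hfT]
    refine Submodule.mem_comap.mp (Submodule.span_le.mpr ?_ hfE)
    rintro _ ⟨w, hw, rfl⟩
    rw [SetLike.mem_coe, Submodule.mem_comap, sigmaT_latticeChar]
    exact Submodule.smul_mem _ _ (orbitVec_mem_span_orbitReps hw)
  · rintro _ ⟨⟨k, -, rfl⟩, rfl⟩
    exact Submodule.mem_inf.mpr ⟨orbitVec_mem_Espace k, orbitVec_mem_fixT k⟩

lemma orbitCoeff_self_ne_zero {k : ℤ × ℤ × ℤ} (hk : k ∈ orbitReps) : orbitCoeff k k ≠ 0 := by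
  rcases hk with hk | hk
  · rw [orbitCoeff_of_mem_zAxis (zAxisFixed_subset_zAxis hk), Finsupp.single_eq_same,
      phase_eq_one_iff.mpr hk.2.2]
    norm_num
  · rw [orbitCoeff, Finsupp.finsetSum_apply, sum_eq_single 0 (fun j hj hj0 => ?_) (by simp)]
    · simp
    · refine Finsupp.single_eq_of_ne fun h => hj0 ?_
      exact (eq_and_eq_of_rot_iterate_eq hk hk (mem_range.mp hj) four_pos h.symm).1

lemma orbitCoeff_apply_eq_zero {k k' : ℤ × ℤ × ℤ} (hk : k ∈ orbitReps) (hk' : k' ∈ orbitReps)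
    (hne : k ≠ k') : orbitCoeff k k' = 0 := by
  rw [orbitCoeff, Finsupp.finsetSum_apply]
  exact sum_eq_zero fun j hj => Finsupp.single_eq_of_ne fun h =>
    hne (eq_of_rot_iterate_eq_of_mem_orbitReps hk hk' (mem_range.mp hj) h.symm)

lemma linearIndependent_of_apply_diagonal {ι α R : Type*} [Ring R] [NoZeroDivisors R]
    (c : ι → α →₀ R) (e : ι → α) (hdiag : ∀ i, c i (e i) ≠ 0)
    (hoff : ∀ i j, i ≠ j → c i (e j) = 0) : LinearIndependent R c := by
  refine linearIndependent_iff'.mpr fun s g hg i hi => ?_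
  have hi' := congrArg (fun l : α →₀ R => l (e i)) hg
  simp only [Finsupp.finsetSum_apply, Finsupp.smul_apply, smul_eq_mul, Finsupp.coe_zero,
    Pi.zero_apply] at hi'
  rw [sum_eq_single i (fun j _ hji => by rw [hoff j i hji, mul_zero]) (absurd hi)] at hi'
  exact (mul_eq_zero.mp hi').resolve_right (hdiag i)

lemma linearIndependent_orbitVec : LinearIndependent ℂ fun k : orbitReps => orbitVec k :=
  (linearIndependent_of_apply_diagonal (fun k : orbitReps => orbitCoeff k) Subtype.val
    (fun k => orbitCoeff_self_ne_zero k.2)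
    (fun k k' h => orbitCoeff_apply_eq_zero k.2 k'.2 (Subtype.coe_ne_coe.mpr h))).map' _
    (LinearMap.ker_eq_bot.mpr linearIndependent_latticeChar)

theorem mT_eq_natCard (μ : ℝ) : mT μ = Nat.card ↥(orbitReps ∩ normSq ⁻¹' {μ}) := by
  have : Fintype ↥(orbitReps ∩ normSq ⁻¹' {μ}) :=
    ((finite_normSq_fiber μ).inter_of_right orbitReps).fintype
  have hli : LinearIndependent ℂ fun k : ↥(orbitReps ∩ normSq ⁻¹' {μ}) => orbitVec k :=
    linearIndependent_orbitVec.comp (Set.inclusion Set.inter_subset_left)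
      (Set.inclusion_injective Set.inter_subset_left)
  rw [mT, Espace_inf_fixT_eq_span, finrank_span_eq_card hli, Nat.card_eq_fintype_card]

end Dimension

section HeatTrace

lemma hasSum_natCard_fiber_mul {β γ : Type*} {N : β → γ} {s : Set β} {g : γ → ℝ}
    (h : Summable fun b : s => g (N b)) :
    HasSum (fun c => (Nat.card ↥(s ∩ N ⁻¹' {c}) : ℝ) * g c) (∑' b : s, g (N b)) := by
  have hfiber (c : γ) : ∑' b : ↥((N ∘ Subtype.val) ⁻¹' {c} : Set s), g (N b)
      = Nat.card ↥(s ∩ N ⁻¹' {c}) * g c := by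
    rw [tsum_congr fun b => by rw [show N b = c from b.2], tsum_const, nsmul_eq_mul]
    exact congrArg (fun n : ℕ => (n : ℝ) * g c)
      (Nat.card_congr (Equiv.subtypeSubtypeEquivSubtypeInter (· ∈ s) fun b => N b = c))
  simpa only [hfiber] using h.hasSum.tsum_fiberwise (N ∘ Subtype.val)

lemma tsum_zAxis (F : ℤ × ℤ × ℤ → ℝ) : ∑' w : zAxis, F w = ∑' n : ℤ, F (0, 0, n) := by
  have : zAxis = Set.range fun n : ℤ => ((0, 0, n) : ℤ × ℤ × ℤ) := by
    ext ⟨a, b, m⟩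
    simp [zAxis, eq_comm]
  rw [this, tsum_range F fun n n' h => by simpa using h]

lemma tsum_zAxisFixed (F : ℤ × ℤ × ℤ → ℝ) :
    ∑' w : zAxisFixed, F w = ∑' n : ℤ, F (0, 0, 4 * n) := by
  have : zAxisFixed = Set.range fun n : ℤ => ((0, 0, 4 * n) : ℤ × ℤ × ℤ) := by
    ext ⟨a, b, m⟩
    simp [zAxisFixed, Dvd.dvd, eq_comm]
  rw [this, tsum_range F fun n n' h => by simpa using h]

variable {F : ℤ × ℤ × ℤ → ℝ}

lemma tsum_compl_zAxis (hF : Summable F) (hrot : ∀ w, F (rot w) = F w) :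
    ∑' w : ↥zAxisᶜ, F w = 4 * ∑' k : quadrant, F k := by
  have hprod : ∀ p : Fin 4 × quadrant, F (quadrantOrbitEquiv p) = F p.2 := fun p =>
    apply_rot_iterate hrot _ _
  have hsum : Summable fun p : Fin 4 × quadrant => F p.2 := by
    simpa only [Function.comp_def, hprod] using
      quadrantOrbitEquiv.summable_iff.mpr (hF.subtype zAxisᶜ)
  rw [← quadrantOrbitEquiv.tsum_eq, tsum_congr hprod, hsum.tsum_prod]
  simp

lemma tsum_orbitReps (hF : Summable F) (hrot : ∀ w, F (rot w) = F w) :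
    ∑' k : orbitReps, F k
      = ∑' n : ℤ, F (0, 0, 4 * n) + (∑' w, F w - ∑' n : ℤ, F (0, 0, n)) / 4 := by
  rw [orbitReps, Summable.tsum_union_disjoint (s := zAxisFixed) (t := quadrant)
    (disjoint_zAxis_quadrant.mono_left zAxisFixed_subset_zAxis) (hF.subtype _) (hF.subtype _),
    ← Summable.tsum_add_tsum_compl (s := zAxis) (hF.subtype _) (hF.subtype _),
    tsum_compl_zAxis hF hrot, tsum_zAxisFixed, tsum_zAxis]
  ring

end HeatTrace

end Tetra

end

/-- the heat-trace identity
`K_Tetra − (1/4)·K_TwoTall = K_{ℝ/(1/2)ℤ} − (1/4)·K_{ℝ/2ℤ}` for every `t > 0`,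
together with countable support and summability of the spectral sum of Tetra. -/
theorem heat_trace_identity (t : ℝ) (ht : 0 < t) :
    (Function.support fun μ : ℝ => (mT μ : ℝ) * Real.exp (-(4 * Real.pi ^ 2 * μ * t))).Countable ∧
    Summable (fun μ : ℝ => (mT μ : ℝ) * Real.exp (-(4 * Real.pi ^ 2 * μ * t))) ∧
    (∑' μ : ℝ, (mT μ : ℝ) * Real.exp (-(4 * Real.pi ^ 2 * μ * t)))
        - (1 / 4) * (∑' v : ℤ × ℤ × ℤ, Real.exp (-(4 * Real.pi ^ 2 *
            ((v.1 : ℝ) ^ 2 + (v.2.1 : ℝ) ^ 2 + (v.2.2 : ℝ) ^ 2 / 4) * t)))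
      = (∑' n : ℤ, Real.exp (-(16 * Real.pi ^ 2 * (n : ℝ) ^ 2 * t)))
        - (1 / 4) * (∑' n : ℤ, Real.exp (-(Real.pi ^ 2 * (n : ℝ) ^ 2 * t))) := by
  have hF : Summable fun w => Real.exp (-(4 * π ^ 2 * Tetra.normSq w * t)) :=
    (Tetra.summable_exp_neg_mul_normSq (s := 4 * π ^ 2 * t) (by positivity)).congr fun w => by
      ring_nf
  have hspec : HasSum (fun μ : ℝ => (mT μ : ℝ) * Real.exp (-(4 * π ^ 2 * μ * t)))
      (∑' k : Tetra.orbitReps, Real.exp (-(4 * π ^ 2 * Tetra.normSq k * t))) :=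
    (Tetra.hasSum_natCard_fiber_mul (N := Tetra.normSq)
      (g := fun μ => Real.exp (-(4 * π ^ 2 * μ * t))) (hF.subtype _)).congr_fun fun μ => by
      rw [Tetra.mT_eq_natCard]
  have hreps := Tetra.tsum_orbitReps hF fun w => by simp only [Tetra.normSq_rot]
  beta_reduce at hreps
  have haxis₄ (n : ℤ) : Real.exp (-(4 * π ^ 2 * Tetra.normSq (0, 0, 4 * n) * t))
      = Real.exp (-(16 * π ^ 2 * (n : ℝ) ^ 2 * t)) := by
    simp only [Tetra.normSq]
    push_cast
    ring_nf
  have haxis (n : ℤ) : Real.exp (-(4 * π ^ 2 * Tetra.normSq (0, 0, n) * t))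
      = Real.exp (-(π ^ 2 * (n : ℝ) ^ 2 * t)) := by
    simp only [Tetra.normSq]
    push_cast
    ring_nf
  refine ⟨hspec.summable.countable_support, hspec.summable, ?_⟩
  rw [hspec.tsum_eq, hreps, tsum_congr haxis₄, tsum_congr haxis]
  simp only [Tetra.normSq]
  ring
end
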